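/- arXiv:2505.09212 — 5 statements merged into one kernel-verified Lean document; each statement's English description precedes it below -/
import Mathlib

section
/- Assume μ(X) = 1 and that there is λ_1 > 0 such that ‖P_t(f − ∫_X f dμ)‖_{L^2(X,μ)} ≤ e^{−λ_1 t} ‖f − ∫_X f dμ‖_{L^2(X,μ)} for all f ∈ L^2(X,μ) and t > 0. Then for every t > 0 and every measurable set E with 0 < μ(E) ≤ 1/2 and Per_h(E) := ‖1_E‖_{1,h} < ∞, one has Per_h(E)/μ(E) ≥ (1 − e^{−λ_1 t})/h(t); consequently the Cheeger constant C_h := inf{ Per_h(E)/μ(E) : μ(E) ≤ 1/2, Per_h(E) < ∞ } satisfies C_h ≥ sup_{t>0} (1 − e^{−λ_1 t})/h(t). -/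
open MeasureTheory Filter Set ENNReal ProbabilityTheory Topology

/-- `N_{1,t}(f) = ∫∫ |f(x)−f(y)| κ_t(y)(dx) dμ(y)`. -/
noncomputable def N1t {X : Type*} [MeasurableSpace X] (μ : Measure X)
    (κ : Kernel X X) (f : X → ℝ) : ℝ≥0∞ :=
  ∫⁻ y, ∫⁻ x, ENNReal.ofReal |f x - f y| ∂(κ y) ∂μ

/-- The Besov seminorm `‖f‖_{1,h} = sup_{t>0} h(t)⁻¹ N_{1,t}(f)`. -/
noncomputable def besovSeminorm1 {X : Type*} [MeasurableSpace X] (μ : Measure X)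
    (κ : ℝ → Kernel X X) (h : ℝ → ℝ) (f : X → ℝ) : ℝ≥0∞ :=
  ⨆ (t : ℝ) (_ : 0 < t), (ENNReal.ofReal (h t))⁻¹ * N1t μ (κ t) f

/-- The h-perimeter `Per_h(E) = ‖1_E‖_{1,h}`. -/
noncomputable def perH {X : Type*} [MeasurableSpace X] (μ : Measure X)
    (κ : ℝ → Kernel X X) (h : ℝ → ℝ) (E : Set X) : ℝ≥0∞ :=
  besovSeminorm1 μ κ h (E.indicator fun _ => (1:ℝ))

lemma sq_eLpNorm_two {X : Type*} [MeasurableSpace X] (μ : Measure X) (u : X → ℝ) :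
    (eLpNorm u 2 μ) ^ (2:ℝ) = ∫⁻ x, ENNReal.ofReal ((u x)^2) ∂μ := by
  rw [eLpNorm_eq_lintegral_rpow_enorm_toReal (by norm_num) (by norm_num), ← ENNReal.rpow_mul]
  have h2 : (2:ℝ≥0∞).toReal = 2 := by simp
  rw [h2, one_div, inv_mul_cancel₀ (by norm_num : (2:ℝ) ≠ 0), ENNReal.rpow_one]
  apply lintegral_congr
  intro x
  have h1 : ‖u x‖ₑ = ENNReal.ofReal |u x| := by
    rw [← Real.norm_eq_abs, ofReal_norm]
  rw [h1, ENNReal.ofReal_rpow_of_nonneg (abs_nonneg _) (by norm_num)]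
  congr 1
  rw [show (2:ℝ) = ((2:ℕ):ℝ) by norm_num, Real.rpow_natCast, sq_abs]

theorem stmt4 {X : Type*} [MeasurableSpace X] (μ : Measure X) [IsProbabilityMeasure μ]
    (κ : ℝ → Kernel X X) (hκ : ∀ t > (0:ℝ), IsMarkovKernel (κ t))
    -- μ-symmetry of the kernels
    (hsymm : ∀ t > (0:ℝ), ∀ f g : X → ℝ≥0∞, Measurable f → Measurable g →
      (∫⁻ x, f x * (∫⁻ y, g y ∂(κ t x)) ∂μ) = ∫⁻ x, g x * (∫⁻ y, f y ∂(κ t x)) ∂μ)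
    -- semigroup property P_{t+s} = P_t ∘ P_s
    (hsemi : ∀ t > (0:ℝ), ∀ s > (0:ℝ), ∀ g : X → ℝ≥0∞, Measurable g → ∀ x : X,
      (∫⁻ y, g y ∂(κ (t + s) x)) = ∫⁻ y, (∫⁻ z, g z ∂(κ s y)) ∂(κ t x))
    (h : ℝ → ℝ) (hmono : MonotoneOn h (Ici 0)) (h0 : h 0 = 0)
    (hpos : ∀ t > (0:ℝ), 0 < h t)
    -- spectral gap: ‖P_t (f − ∫ f dμ)‖_2 ≤ e^{−λ₁ t} ‖f − ∫ f dμ‖_2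
    (lam : ℝ) (hlam : 0 < lam)
    (hspec : ∀ f : X → ℝ, MemLp f 2 μ → ∀ t > (0:ℝ),
      eLpNorm (fun x => ∫ y, (f y - ∫ z, f z ∂μ) ∂(κ t x)) 2 μ
        ≤ ENNReal.ofReal (Real.exp (-lam * t)) *
            eLpNorm (fun x => f x - ∫ z, f z ∂μ) 2 μ) :
    (∀ t > (0:ℝ), ∀ E : Set X, MeasurableSet E → 0 < μ E → μ E ≤ 1 / 2 →
      perH μ κ h E < ∞ →
      ENNReal.ofReal ((1 - Real.exp (-lam * t)) / h t) ≤ perH μ κ h E / μ E) ∧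
    (⨆ t : Ioi (0:ℝ), ENNReal.ofReal ((1 - Real.exp (-lam * (t:ℝ))) / h t))
      ≤ ⨅ (E : Set X) (_ : MeasurableSet E ∧ 0 < μ E ∧ μ E ≤ 1 / 2 ∧ perH μ κ h E < ∞),
          perH μ κ h E / μ E := by
  classical
  have key : ∀ t > (0:ℝ), ∀ E : Set X, MeasurableSet E → 0 < μ E → μ E ≤ 1 / 2 →
      perH μ κ h E < ∞ →
      ENNReal.ofReal ((1 - Real.exp (-lam * t)) / h t) ≤ perH μ κ h E / μ E := by
    intro t ht E hE hEpos hEhalf _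
    set s := t / 2 with hs_def
    have hs : 0 < s := by positivity
    have hts : t = s + s := by rw [hs_def]; ring
    haveI := hκ t ht
    haveI := hκ s hs
    set m : ℝ := (μ E).toReal with hm_def
    have hμEfin : μ E ≠ ∞ := (lt_of_le_of_lt hEhalf (by norm_num)).ne
    have hμE : μ E = ENNReal.ofReal m := (ENNReal.ofReal_toReal hμEfin).symm
    have hm0 : 0 ≤ m := ENNReal.toReal_nonneg
    have hmhalf : m ≤ 1/2 := by
      calc m ≤ ((1:ℝ≥0∞)/2).toReal := ENNReal.toReal_mono (by norm_num) hEhalf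
        _ = 1/2 := by norm_num
    have hexp1 : Real.exp (-lam * t) ≤ 1 :=
      Real.exp_le_one_iff.2 (by nlinarith)
    set f : X → ℝ := E.indicator fun _ => (1:ℝ) with hf_def
    set find : X → ℝ≥0∞ := E.indicator fun _ => (1:ℝ≥0∞) with hfind_def
    set gind : X → ℝ≥0∞ := Eᶜ.indicator fun _ => (1:ℝ≥0∞) with hgind_def
    have hfind_m : Measurable find := measurable_const.indicator hE
    have hgind_m : Measurable gind := measurable_const.indicator hE.compl
    have hlint_find : ∀ ν : Measure X, ∫⁻ x, find x ∂ν = ν E := fun ν =>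
      lintegral_indicator_one hE
    have hlint_gind : ∀ ν : Measure X, ∫⁻ x, gind x ∂ν = ν Eᶜ := fun ν =>
      lintegral_indicator_one hE.compl
    set b : X → ℝ≥0∞ := fun y => κ s y E with hb_def
    have hb_m : Measurable b := Kernel.measurable_coe (κ s) hE
    have hb_le : ∀ y, b y ≤ 1 := fun y => prob_le_one
    set a : X → ℝ≥0∞ := fun y => κ t y E with ha_def
    have ha_m : Measurable a := Kernel.measurable_coe (κ t) hE
    have ha_le : ∀ y, a y ≤ 1 := fun y => prob_le_one
    -- N1t formula
    have hN : N1t μ (κ t) f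
        = (∫⁻ y in E, κ t y Eᶜ ∂μ) + ∫⁻ y in Eᶜ, a y ∂μ := by
      have hint : ∀ y, (∫⁻ x, ENNReal.ofReal |f x - f y| ∂(κ t y))
          = if y ∈ E then κ t y Eᶜ else κ t y E := by
        intro y
        by_cases hy : y ∈ E
        · simp only [hy, if_true]
          rw [← hlint_gind (κ t y)]
          apply lintegral_congr; intro x
          by_cases hx : x ∈ E <;>
            simp [hf_def, hgind_def, Set.indicator_apply, hx, hy]
        · simp only [hy, if_false]
          rw [← hlint_find (κ t y)]
          apply lintegral_congr; intro x
          by_cases hx : x ∈ E <;>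
            simp [hf_def, hfind_def, Set.indicator_apply, hx, hy]
      unfold N1t
      simp_rw [hint]
      have heq : ∀ y, (if y ∈ E then κ t y Eᶜ else κ t y E)
          = E.indicator (fun y => κ t y Eᶜ) y + Eᶜ.indicator a y := by
        intro y
        by_cases hy : y ∈ E <;> simp [Set.indicator_apply, hy, ha_def]
      simp_rw [heq]
      rw [lintegral_add_left ((Kernel.measurable_coe (κ t) hE.compl).indicator hE),
        lintegral_indicator hE, lintegral_indicator hE.compl]
    have hsym1 : (∫⁻ y in E, κ t y Eᶜ ∂μ) = ∫⁻ y in Eᶜ, a y ∂μ := by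
      have h1 := hsymm t ht find gind hfind_m hgind_m
      simp_rw [hlint_find, hlint_gind] at h1
      have e1 : (∫⁻ x, find x * κ t x Eᶜ ∂μ) = ∫⁻ y in E, κ t y Eᶜ ∂μ := by
        rw [← lintegral_indicator hE]
        apply lintegral_congr; intro x
        by_cases hx : x ∈ E <;> simp [hfind_def, Set.indicator_apply, hx]
      have e2 : (∫⁻ x, gind x * κ t x E ∂μ) = ∫⁻ y in Eᶜ, a y ∂μ := by
        rw [← lintegral_indicator hE.compl]
        apply lintegral_congr; intro x
        by_cases hx : x ∈ Eᶜ <;> simp [hgind_def, Set.indicator_apply, ha_def, hx]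
      rw [← e1, ← e2, h1]
    set I : ℝ≥0∞ := ∫⁻ y in E, a y ∂μ with hI_def
    have hIfin : I ≠ ∞ := by
      have hle : I ≤ ∫⁻ _ in E, 1 ∂μ := lintegral_mono fun y => ha_le y
      simp only [lintegral_const, one_mul, Measure.restrict_apply_univ] at hle
      exact (lt_of_le_of_lt hle (lt_of_le_of_lt hEhalf (by norm_num))).ne
    have hcompl : ∀ y, κ t y Eᶜ = 1 - a y := by
      intro y
      rw [measure_compl hE (measure_ne_top _ _)]
      simp [ha_def]
    have hhalfN : (∫⁻ y in E, κ t y Eᶜ ∂μ) = μ E - I := by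
      simp_rw [hcompl]
      rw [lintegral_sub ha_m hIfin (ae_of_all _ fun y => ha_le y)]
      simp [hI_def]
    have hN2 : N1t μ (κ t) f = 2 * (μ E - I) := by
      rw [hN, ← hsym1, hhalfN, two_mul]
    -- semigroup
    have hsg : I = ∫⁻ y, b y * b y ∂μ := by
      have e0 : ∀ y, a y = ∫⁻ z, (∫⁻ w, find w ∂(κ s z)) ∂(κ s y) := by
        intro y
        have hh := hsemi s hs s hs find hfind_m y
        rw [← hts] at hh
        rw [ha_def]
        simp only
        rw [← hlint_find (κ t y), hh]
      have e1 : I = ∫⁻ y, find y * (∫⁻ z, b z ∂(κ s y)) ∂μ := by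
        rw [hI_def, ← lintegral_indicator hE]
        apply lintegral_congr; intro y
        by_cases hy : y ∈ E
        · simp only [Set.indicator_apply, hy, if_true, hfind_def, one_mul]
          rw [e0 y]
          apply lintegral_congr; intro z
          rw [hlint_find]
        · simp [Set.indicator_apply, hy, hfind_def]
      rw [e1, hsymm s hs find b hfind_m hb_m]
      apply lintegral_congr; intro y
      rw [hlint_find]
    set g : X → ℝ := fun y => (b y).toReal with hg_def
    have hg_m : Measurable g := hb_m.ennreal_toReal
    have hg0 : ∀ y, 0 ≤ g y := fun y => ENNReal.toReal_nonneg
    have hg1 : ∀ y, g y ≤ 1 := fun y => by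
      calc g y ≤ (1:ℝ≥0∞).toReal := ENNReal.toReal_mono (by norm_num) (hb_le y)
        _ = 1 := by norm_num
    have hb_of : ∀ y, b y = ENNReal.ofReal (g y) := fun y =>
      (ENNReal.ofReal_toReal (lt_of_le_of_lt (hb_le y) (by norm_num)).ne).symm
    have hbint : ∫⁻ y, b y ∂μ = μ E := by
      have h1 := hsymm s hs (fun _ => (1:ℝ≥0∞)) find measurable_const hfind_m
      simp_rw [hlint_find] at h1
      have hone : ∀ x : X, (∫⁻ _, (1:ℝ≥0∞) ∂(κ s x)) = 1 := fun x => by simp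
      simp_rw [hone, one_mul, mul_one] at h1
      rw [hb_def]; simp only
      rw [h1]; exact hlint_find μ
    have hgint : ∫ y, g y ∂μ = m := by
      rw [hg_def]
      rw [integral_toReal hb_m.aemeasurable
        (Filter.Eventually.of_forall fun y => lt_of_le_of_lt (hb_le y) (by norm_num))]
      rw [hbint]
    have hgInt : Integrable g μ :=
      ⟨hg_m.aestronglyMeasurable, HasFiniteIntegral.of_bounded (C := 1)
        (Filter.Eventually.of_forall fun y => by
          rw [Real.norm_eq_abs, abs_of_nonneg (hg0 y)]; exact hg1 y)⟩
    have hg2Int : Integrable (fun y => g y ^ 2) μ :=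
      ⟨(hg_m.pow_const 2).aestronglyMeasurable, HasFiniteIntegral.of_bounded (C := 1)
        (Filter.Eventually.of_forall fun y => by
          rw [Real.norm_eq_abs, abs_of_nonneg (by positivity)]
          nlinarith [hg0 y, hg1 y])⟩
    have hgm2Int : Integrable (fun y => (g y - m) ^ 2) μ := by
      have heq : (fun y => (g y - m)^2) = fun y => g y ^2 - (2*m) * g y + m^2 := by
        ext y; ring
      rw [heq]
      exact (hg2Int.sub (hgInt.const_mul (2*m))).add (integrable_const _)
    have hsplit : ∫ y, g y ^ 2 ∂μ = (∫ y, (g y - m)^2 ∂μ) + m^2 := by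
      have e : ∫ y, (g y - m)^2 ∂μ
          = (∫ y, g y ^2 ∂μ) - 2*m*(∫ y, g y ∂μ) + m^2 := by
        have heq : (fun y => (g y - m)^2) = fun y => g y ^2 - (2*m) * g y + m^2 := by
          ext y; ring
        have i0 : Integrable (fun y => (2*m) * g y) μ := hgInt.const_mul (2*m)
        have i1 : Integrable (fun y => g y ^2 - (2*m) * g y) μ := hg2Int.sub i0
        have i2 : Integrable (fun _ : X => m^2) μ := integrable_const _
        rw [heq]
        rw [integral_add i1 i2]
        rw [integral_sub hg2Int i0]
        rw [integral_const_mul]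
        rw [integral_const]
        simp [mul_assoc]
      rw [e, hgint]
      ring
    have hI_real : I = ENNReal.ofReal (∫ y, g y ^ 2 ∂μ) := by
      rw [hsg, ofReal_integral_eq_lintegral_ofReal hg2Int
        (Filter.Eventually.of_forall fun y => by positivity)]
      apply lintegral_congr; intro y
      rw [hb_of y, ← ENNReal.ofReal_mul (hg0 y), sq]
    -- spectral gap
    have hmem : MemLp f 2 μ := memLp_indicator_const 2 hE 1 (Or.inr hμEfin)
    have hfmean : (∫ z, f z ∂μ) = m := by
      rw [hf_def, integral_indicator_const (1:ℝ) hE]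
      simp [hm_def, measureReal_def]
    have hPt : ∀ x, (∫ y, (f y - ∫ z, f z ∂μ) ∂(κ s x)) = g x - m := by
      intro x
      have hfInt : Integrable f (κ s x) := by
        rw [hf_def]; exact (integrable_const (1:ℝ)).indicator hE
      rw [hfmean, integral_sub hfInt (integrable_const m), integral_const]
      simp only [probReal_univ, one_smul]
      congr 1
      rw [hf_def, integral_indicator_const (1:ℝ) hE]
      simp [hg_def, hb_def, measureReal_def]
    have hspec' := hspec f hmem s hs
    simp_rw [hPt] at hspec'
    rw [hfmean] at hspec'
    set c : ℝ≥0∞ := ENNReal.ofReal (Real.exp (-lam * s)) with hc_def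
    have hsq : (∫⁻ x, ENNReal.ofReal ((g x - m)^2) ∂μ)
        ≤ c^(2:ℝ) * ∫⁻ x, ENNReal.ofReal ((f x - m)^2) ∂μ := by
      rw [← sq_eLpNorm_two μ (fun x => g x - m), ← sq_eLpNorm_two μ (fun x => f x - m),
        ← ENNReal.mul_rpow_of_nonneg _ _ (by norm_num : (0:ℝ) ≤ 2)]
      exact ENNReal.rpow_le_rpow hspec' (by norm_num)
    have hfvar : (∫⁻ x, ENNReal.ofReal ((f x - m)^2) ∂μ)
        = ENNReal.ofReal (m * (1-m)) := by
      have heq : ∀ x, ENNReal.ofReal ((f x - m)^2)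
          = E.indicator (fun _ => ENNReal.ofReal ((1-m)^2)) x
            + Eᶜ.indicator (fun _ => ENNReal.ofReal (m^2)) x := by
        intro x
        by_cases hx : x ∈ E <;>
          simp [hf_def, Set.indicator_apply, hx, zero_sub, neg_sq]
      simp_rw [heq]
      rw [lintegral_add_left (measurable_const.indicator hE),
        lintegral_indicator_const hE, lintegral_indicator_const hE.compl,
        measure_compl hE (measure_ne_top _ _), measure_univ, hμE,
        ← ENNReal.ofReal_one, ← ENNReal.ofReal_sub _ hm0,
        ← ENNReal.ofReal_mul (sq_nonneg (1-m)), ← ENNReal.ofReal_mul (sq_nonneg m),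
        ← ENNReal.ofReal_add (mul_nonneg (sq_nonneg _) hm0)
          (mul_nonneg (sq_nonneg _) (by linarith))]
      congr 1
      ring
    have hc2 : c ^ (2:ℝ) = ENNReal.ofReal (Real.exp (-lam * t)) := by
      rw [hc_def, ENNReal.ofReal_rpow_of_nonneg (Real.exp_nonneg _) (by norm_num)]
      congr 1
      rw [show (2:ℝ) = ((2:ℕ):ℝ) by norm_num, Real.rpow_natCast, sq, ← Real.exp_add]
      congr 1
      rw [hts]; ring
    set q : ℝ := Real.exp (-lam * t) * (m * (1-m)) + m^2 with hq_def
    have hq0 : 0 ≤ q := by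
      rw [hq_def]
      have h1 := mul_nonneg (Real.exp_nonneg (-lam * t))
        (mul_nonneg hm0 (by linarith : (0:ℝ) ≤ 1 - m))
      nlinarith [sq_nonneg m]
    have hIbound : I ≤ ENNReal.ofReal q := by
      have hvar : ENNReal.ofReal (∫ y, (g y - m)^2 ∂μ)
          ≤ ENNReal.ofReal (Real.exp (-lam*t) * (m*(1-m))) := by
        rw [ofReal_integral_eq_lintegral_ofReal hgm2Int
          (Filter.Eventually.of_forall fun y => by positivity)]
        calc (∫⁻ x, ENNReal.ofReal ((g x - m)^2) ∂μ)
            ≤ c^(2:ℝ) * ∫⁻ x, ENNReal.ofReal ((f x - m)^2) ∂μ := hsq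
          _ = ENNReal.ofReal (Real.exp (-lam*t)) * ENNReal.ofReal (m*(1-m)) := by
              rw [hc2, hfvar]
          _ = ENNReal.ofReal (Real.exp (-lam*t) * (m*(1-m))) :=
              (ENNReal.ofReal_mul (Real.exp_nonneg _)).symm
      rw [hI_real, hsplit, hq_def,
        ENNReal.ofReal_add (integral_nonneg fun y => by positivity) (sq_nonneg m),
        ENNReal.ofReal_add (mul_nonneg (Real.exp_nonneg _)
          (mul_nonneg hm0 (by linarith))) (sq_nonneg m)]
      exact add_le_add_left hvar _
    have hNlow : ENNReal.ofReal ((1 - Real.exp (-lam*t)) * m) ≤ N1t μ (κ t) f := by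
      rw [hN2]
      have h1 : ENNReal.ofReal (m - q) ≤ μ E - I := by
        rw [ENNReal.ofReal_sub m hq0, ← hμE]
        exact tsub_le_tsub_left hIbound (μ E)
      calc ENNReal.ofReal ((1 - Real.exp (-lam*t)) * m)
          ≤ ENNReal.ofReal (2 * (m - q)) := by
            apply ENNReal.ofReal_le_ofReal
            rw [hq_def]
            nlinarith [mul_nonneg (mul_nonneg hm0 (by linarith : (0:ℝ) ≤ 1 - 2*m))
              (by linarith : (0:ℝ) ≤ 1 - Real.exp (-lam*t))]
        _ = 2 * ENNReal.ofReal (m - q) := by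
            rw [ENNReal.ofReal_mul (by norm_num)]
            norm_num
        _ ≤ 2 * (μ E - I) := by gcongr
    -- conclude
    rw [ENNReal.le_div_iff_mul_le (Or.inl hEpos.ne') (Or.inl hμEfin)]
    have hhden : 0 < h t := hpos t ht
    calc ENNReal.ofReal ((1 - Real.exp (-lam * t)) / h t) * μ E
        = (ENNReal.ofReal (h t))⁻¹ * ENNReal.ofReal ((1 - Real.exp (-lam*t)) * m) := by
          rw [hμE, ← ENNReal.ofReal_mul (div_nonneg (by linarith) hhden.le),
            div_mul_eq_mul_div, ENNReal.ofReal_div_of_pos hhden,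
            ENNReal.div_eq_inv_mul]
      _ ≤ (ENNReal.ofReal (h t))⁻¹ * N1t μ (κ t) f := mul_le_mul_right hNlow _
      _ ≤ perH μ κ h E := by
          rw [perH, besovSeminorm1, ← hf_def]
          exact le_iSup_of_le t (le_iSup_of_le ht le_rfl)
  refine ⟨key, ?_⟩
  refine le_iInf fun E => le_iInf fun hcond => iSup_le ?_
  rintro ⟨t, ht⟩
  exact key t ht E hcond.1 hcond.2.1 hcond.2.2.1 hcond.2.2.2
end

section
/- Suppose the heat semigroup P_t on X satisfies the weak Bakry–Émery condition wBE(β_1−α_1, β_2−α_2) where 1 ≤ α_i < β_i, i.e. there is C > 0 such that |P_t f(x) − P_t f(y)| ≤ C σ_{β_1−α_1,β_2−α_2}(d(x,y)) σ_{(β_1−α_1)/β_1,(β_2−α_2)/β_2}(t)^{-1} ‖f‖_{L^∞} for all t>0, x,y ∈ X, f ∈ L^∞(X,μ). Then the product semigroup P_t^{X²} on X² = X×X, defined by the product kernel p_t^{X²}((x_1,x_2),(y_1,y_2)) = p_t(x_1,y_1)p_t(x_2,y_2) with respect to μ⊗μ, satisfies wBE(β_1−α_1, β_2−α_2) for the metric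 d_{X²}((x_1,x_2),(y_1,y_2)) = d(x_1,y_1) + d(x_2,y_2): there is C' > 0 with |P_t^{X²} f(𝐱) − P_t^{X²} f(𝐱')| ≤ C' σ_{β_1−α_1,β_2−α_2}(d_{X²}(𝐱,𝐱')) σ_{(β_1−α_1)/β_1,(β_2−α_2)/β_2}(t)^{-1} ‖f‖_{L^∞(X²)} for all t>0, 𝐱,𝐱' ∈ X², f ∈ L^∞(X²,μ⊗μ). -/
open MeasureTheory Filter Set ENNReal Topology

/-- The function `σ_{a,b}(r) = r^a` for `0 ≤ r ≤ 1` and `r^b` for `r > 1`. -/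
noncomputable def sg (a b r : ℝ) : ℝ := if r ≤ 1 then r ^ a else r ^ b

lemma sg_pos {a b r : ℝ} (hr : 0 < r) : 0 < sg a b r := by
  unfold sg; split <;> exact Real.rpow_pos_of_pos hr _

lemma sg_mono {a b : ℝ} (ha : 0 ≤ a) (hb : 0 ≤ b) {r s : ℝ} (hr : 0 ≤ r) (hrs : r ≤ s) :
    sg a b r ≤ sg a b s := by
  unfold sg
  rcases le_or_gt s 1 with hs | hs
  · rw [if_pos (hrs.trans hs), if_pos hs]
    exact Real.rpow_le_rpow hr hrs ha
  · rw [if_neg (not_le.2 hs)]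
    rcases le_or_gt r 1 with hr1 | hr1
    · rw [if_pos hr1]
      calc r ^ a ≤ 1 := Real.rpow_le_one hr hr1 ha
        _ = (1:ℝ) ^ b := (Real.one_rpow b).symm
        _ ≤ s ^ b := Real.rpow_le_rpow zero_le_one hs.le hb
    · rw [if_neg (not_le.2 hr1)]
      exact Real.rpow_le_rpow (by linarith) hrs hb

theorem stmt8 {X : Type*} [MeasurableSpace X] [MetricSpace X] [BorelSpace X]
    (μ : Measure X) [SigmaFinite μ]
    (pk : ℝ → X → X → ℝ)
    (hpk_meas : ∀ t > (0:ℝ), Measurable (Function.uncurry (pk t)))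
    (hpk_nonneg : ∀ t > (0:ℝ), ∀ x y, 0 ≤ pk t x y)
    (hpk_symm : ∀ t > (0:ℝ), ∀ x y, pk t x y = pk t y x)
    (hpk_cons : ∀ t > (0:ℝ), ∀ x, (∫⁻ y, ENNReal.ofReal (pk t x y) ∂μ) = 1)
    (α₁ α₂ β₁ β₂ : ℝ) (hα₁ : 1 ≤ α₁) (hαβ₁ : α₁ < β₁) (hα₂ : 1 ≤ α₂) (hαβ₂ : α₂ < β₂)
    -- the weak Bakry–Émery condition wBE(β₁ − α₁, β₂ − α₂) on X
    (C : ℝ) (hC : 0 < C)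
    (hwBE : ∀ t > (0:ℝ), ∀ x y : X, ∀ f : X → ℝ, MemLp f ⊤ μ →
      |(∫ z, pk t x z * f z ∂μ) - ∫ z, pk t y z * f z ∂μ|
        ≤ C * sg (β₁ - α₁) (β₂ - α₂) (dist x y) /
            sg ((β₁ - α₁) / β₁) ((β₂ - α₂) / β₂) t * (eLpNorm f ⊤ μ).toReal) :
    -- the product semigroup on X × X satisfies wBE(β₁ − α₁, β₂ − α₂) for the
    -- metric d((x₁,x₂),(y₁,y₂)) = d(x₁,y₁) + d(x₂,y₂)
    ∃ C' : ℝ, 0 < C' ∧ ∀ t > (0:ℝ), ∀ a b : X × X, ∀ f : X × X → ℝ,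
      MemLp f ⊤ (μ.prod μ) →
      |(∫ z, pk t a.1 z.1 * pk t a.2 z.2 * f z ∂(μ.prod μ)) -
          ∫ z, pk t b.1 z.1 * pk t b.2 z.2 * f z ∂(μ.prod μ)|
        ≤ C' * sg (β₁ - α₁) (β₂ - α₂) (dist a.1 b.1 + dist a.2 b.2) /
            sg ((β₁ - α₁) / β₁) ((β₂ - α₂) / β₂) t * (eLpNorm f ⊤ (μ.prod μ)).toReal := by
  have hb1 : (0:ℝ) < β₁ - α₁ := by linarith
  have hb2 : (0:ℝ) < β₂ - α₂ := by linarith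
  refine ⟨2 * C, by positivity, ?_⟩
  intro t ht a b f hf
  set S := sg ((β₁ - α₁) / β₁) ((β₂ - α₂) / β₂) t with hS
  have hSpos : 0 < S := sg_pos ht
  set M := (eLpNorm f ⊤ (μ.prod μ)).toReal with hM
  have hM0 : 0 ≤ M := ENNReal.toReal_nonneg
  -- basic facts about the kernel at time t
  have hmeas : ∀ x : X, Measurable (pk t x) := fun x =>
    (hpk_meas t ht).comp measurable_prodMk_left
  have hint : ∀ x : X, Integrable (pk t x) μ := by
    intro x
    refine ⟨(hmeas x).aestronglyMeasurable, (hasFiniteIntegral_iff_norm _).2 ?_⟩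
    have h : ∀ y, ENNReal.ofReal ‖pk t x y‖ = ENNReal.ofReal (pk t x y) := fun y => by
      rw [Real.norm_of_nonneg (hpk_nonneg t ht x y)]
    simp_rw [h, hpk_cons t ht x]
    exact one_lt_top
  have hintone : ∀ x : X, ∫ y, pk t x y ∂μ = 1 := by
    intro x
    rw [integral_eq_lintegral_of_nonneg_ae (ae_of_all _ (hpk_nonneg t ht x))
      (hmeas x).aestronglyMeasurable, hpk_cons t ht x]
    simp
  -- a.e. bound on f
  have hfb : ∀ᵐ z ∂(μ.prod μ), |f z| ≤ M := by
    have h1 := ae_le_eLpNormEssSup (f := f) (μ := μ.prod μ)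
    have hfin : eLpNormEssSup f (μ.prod μ) ≠ ∞ := by
      rw [← eLpNorm_exponent_top]; exact hf.2.ne
    filter_upwards [h1] with z hz
    have h2 := ENNReal.toReal_mono hfin hz
    simpa [Real.norm_eq_abs, hM, eLpNorm_exponent_top] using h2
  -- integrability of the product integrand, for any essentially bounded F
  have key : ∀ (F : X × X → ℝ), AEStronglyMeasurable F (μ.prod μ) →
      (∀ᵐ z ∂(μ.prod μ), |F z| ≤ M) → ∀ x w : X,
      Integrable (fun z : X × X => pk t x z.1 * pk t w z.2 * F z) (μ.prod μ) := by
    intro F hF1 hF2 x w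
    have hG : Integrable (fun z : X × X => pk t x z.1 * pk t w z.2 * M) (μ.prod μ) :=
      ((hint x).mul_prod (hint w)).mul_const M
    refine hG.mono' ((((hmeas x).comp measurable_fst).mul
      ((hmeas w).comp measurable_snd)).aestronglyMeasurable.mul hF1) ?_
    filter_upwards [hF2] with z hz
    have h1 : 0 ≤ pk t x z.1 * pk t w z.2 :=
      mul_nonneg (hpk_nonneg t ht x z.1) (hpk_nonneg t ht w z.2)
    rw [Real.norm_eq_abs, abs_mul, abs_of_nonneg h1]
    exact mul_le_mul_of_nonneg_left hz h1
  -- L∞ bound for the partial integral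
  have main : ∀ (F : X × X → ℝ), AEStronglyMeasurable F (μ.prod μ) →
      (∀ᵐ z ∂(μ.prod μ), |F z| ≤ M) → ∀ w : X,
      MemLp (fun u => ∫ v, pk t w v * F (u, v) ∂μ) ⊤ μ ∧
      (eLpNorm (fun u => ∫ v, pk t w v * F (u, v) ∂μ) ⊤ μ).toReal ≤ M := by
    intro F hF1 hF2 w
    have haesm : AEStronglyMeasurable (fun z : X × X => pk t w z.2 * F z) (μ.prod μ) :=
      ((hmeas w).comp measurable_snd).aestronglyMeasurable.mul hF1
    have haesm' : AEStronglyMeasurable (fun u => ∫ v, pk t w v * F (u, v) ∂μ) μ :=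
      haesm.integral_prod_right'
    have hbound : ∀ᵐ u ∂μ, ‖∫ v, pk t w v * F (u, v) ∂μ‖ ≤ M := by
      filter_upwards [Measure.ae_ae_of_ae_prod hF2, hF1.prodMk_left] with u h1 h2
      have hsec : Integrable (fun v => pk t w v * F (u, v)) μ := by
        refine ((hint w).mul_const M).mono'
          ((hmeas w).aestronglyMeasurable.mul h2) ?_
        filter_upwards [h1] with v hv
        rw [Real.norm_eq_abs, abs_mul, abs_of_nonneg (hpk_nonneg t ht w v)]
        exact mul_le_mul_of_nonneg_left hv (hpk_nonneg t ht w v)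
      calc ‖∫ v, pk t w v * F (u, v) ∂μ‖ ≤ ∫ v, ‖pk t w v * F (u, v)‖ ∂μ :=
            norm_integral_le_integral_norm _
        _ ≤ ∫ v, pk t w v * M ∂μ := by
            refine integral_mono_ae hsec.norm ((hint w).mul_const M) ?_
            filter_upwards [h1] with v hv
            rw [Real.norm_eq_abs, abs_mul, abs_of_nonneg (hpk_nonneg t ht w v)]
            exact mul_le_mul_of_nonneg_left hv (hpk_nonneg t ht w v)
        _ = M := by rw [integral_mul_const, hintone w, one_mul]
    have hinf : eLpNorm (fun u => ∫ v, pk t w v * F (u, v) ∂μ) ⊤ μ ≤ ENNReal.ofReal M := by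
      rw [eLpNorm_exponent_top]; exact eLpNormEssSup_le_of_ae_bound hbound
    exact ⟨⟨haesm', lt_of_le_of_lt hinf ofReal_lt_top⟩,
      le_trans (ENNReal.toReal_mono ofReal_ne_top hinf) (by rw [ENNReal.toReal_ofReal hM0])⟩
  -- the swapped function
  have hqmp : Measure.QuasiMeasurePreserving (Prod.swap : X × X → X × X) (μ.prod μ) (μ.prod μ) :=
    (MeasureTheory.Measure.measurePreserving_swap).quasiMeasurePreserving
  have hF'1 : AEStronglyMeasurable (fun z : X × X => f (z.2, z.1)) (μ.prod μ) :=
    hf.1.comp_quasiMeasurePreserving hqmp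
  have hF'2 : ∀ᵐ z ∂(μ.prod μ), |f (z.2, z.1)| ≤ M := hqmp.tendsto_ae.eventually hfb
  -- Fubini identities
  have fubini1 : ∀ x w : X, ∫ z, pk t x z.1 * pk t w z.2 * f z ∂(μ.prod μ)
      = ∫ z₁, pk t x z₁ * (∫ z₂, pk t w z₂ * f (z₁, z₂) ∂μ) ∂μ := by
    intro x w
    rw [integral_prod _ (key f hf.1 hfb x w)]
    simp_rw [mul_assoc, integral_const_mul]
  have fubini2 : ∀ x w : X, ∫ z, pk t x z.1 * pk t w z.2 * f z ∂(μ.prod μ)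
      = ∫ z₂, pk t w z₂ * (∫ z₁, pk t x z₁ * f (z₁, z₂) ∂μ) ∂μ := by
    intro x w
    rw [integral_prod_symm _ (key f hf.1 hfb x w)]
    have h : ∀ z₂ z₁, pk t x z₁ * pk t w z₂ * f (z₁, z₂)
        = pk t w z₂ * (pk t x z₁ * f (z₁, z₂)) := fun _ _ => by ring
    simp_rw [h, integral_const_mul]
  -- the two auxiliary functions
  set g : X → ℝ := fun z₁ => ∫ z₂, pk t a.2 z₂ * f (z₁, z₂) ∂μ with hg
  set q : X → ℝ := fun z₂ => ∫ z₁, pk t b.1 z₁ * f (z₁, z₂) ∂μ with hq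
  obtain ⟨hgmem, hgnorm⟩ := main f hf.1 hfb a.2
  obtain ⟨hqmem, hqnorm⟩ := main (fun z => f (z.2, z.1)) hF'1 hF'2 b.1
  have h1 := hwBE t ht a.1 b.1 g hgmem
  have h2 := hwBE t ht a.2 b.2 q hqmem
  -- sg monotonicity
  set D := dist a.1 b.1 + dist a.2 b.2 with hD
  have hsg1 : sg (β₁ - α₁) (β₂ - α₂) (dist a.1 b.1) ≤ sg (β₁ - α₁) (β₂ - α₂) D :=
    sg_mono hb1.le hb2.le dist_nonneg (le_add_of_nonneg_right dist_nonneg)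
  have hsg2 : sg (β₁ - α₁) (β₂ - α₂) (dist a.2 b.2) ≤ sg (β₁ - α₁) (β₂ - α₂) D :=
    sg_mono hb1.le hb2.le dist_nonneg (le_add_of_nonneg_left dist_nonneg)
  have sg_nn : ∀ {r : ℝ}, 0 ≤ r → 0 ≤ sg (β₁ - α₁) (β₂ - α₂) r := by
    intro r hr; unfold sg; split <;> exact Real.rpow_nonneg hr _
  have hD0 : 0 ≤ D := add_nonneg dist_nonneg dist_nonneg
  have hfracD : 0 ≤ C * sg (β₁ - α₁) (β₂ - α₂) D / S :=
    div_nonneg (mul_nonneg hC.le (sg_nn hD0)) hSpos.le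
  have hterm1 : C * sg (β₁ - α₁) (β₂ - α₂) (dist a.1 b.1) / S * (eLpNorm g ⊤ μ).toReal
      ≤ C * sg (β₁ - α₁) (β₂ - α₂) D / S * M := by
    refine mul_le_mul ?_ hgnorm ENNReal.toReal_nonneg hfracD
    exact (div_le_div_iff_of_pos_right hSpos).2 (mul_le_mul_of_nonneg_left hsg1 hC.le)
  have hqnorm' : (eLpNorm q ⊤ μ).toReal ≤ M := hqnorm
  have hterm2 : C * sg (β₁ - α₁) (β₂ - α₂) (dist a.2 b.2) / S * (eLpNorm q ⊤ μ).toReal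
      ≤ C * sg (β₁ - α₁) (β₂ - α₂) D / S * M := by
    refine mul_le_mul ?_ hqnorm' ENNReal.toReal_nonneg hfracD
    exact (div_le_div_iff_of_pos_right hSpos).2 (mul_le_mul_of_nonneg_left hsg2 hC.le)
  have d1 : |(∫ z, pk t a.1 z.1 * pk t a.2 z.2 * f z ∂(μ.prod μ)) -
        ∫ z, pk t b.1 z.1 * pk t a.2 z.2 * f z ∂(μ.prod μ)|
      = |(∫ z₁, pk t a.1 z₁ * g z₁ ∂μ) - ∫ z₁, pk t b.1 z₁ * g z₁ ∂μ| := by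
    simp only [hg]
    rw [fubini1 a.1 a.2, fubini1 b.1 a.2]
  have d2 : |(∫ z, pk t b.1 z.1 * pk t a.2 z.2 * f z ∂(μ.prod μ)) -
        ∫ z, pk t b.1 z.1 * pk t b.2 z.2 * f z ∂(μ.prod μ)|
      = |(∫ z₂, pk t a.2 z₂ * q z₂ ∂μ) - ∫ z₂, pk t b.2 z₂ * q z₂ ∂μ| := by
    simp only [hq]
    rw [fubini2 b.1 a.2, fubini2 b.1 b.2]
  calc |(∫ z, pk t a.1 z.1 * pk t a.2 z.2 * f z ∂(μ.prod μ)) -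
        ∫ z, pk t b.1 z.1 * pk t b.2 z.2 * f z ∂(μ.prod μ)|
      ≤ |(∫ z, pk t a.1 z.1 * pk t a.2 z.2 * f z ∂(μ.prod μ)) -
          ∫ z, pk t b.1 z.1 * pk t a.2 z.2 * f z ∂(μ.prod μ)| +
        |(∫ z, pk t b.1 z.1 * pk t a.2 z.2 * f z ∂(μ.prod μ)) -
          ∫ z, pk t b.1 z.1 * pk t b.2 z.2 * f z ∂(μ.prod μ)| := abs_sub_le _ _ _
    _ = |(∫ z₁, pk t a.1 z₁ * g z₁ ∂μ) - ∫ z₁, pk t b.1 z₁ * g z₁ ∂μ| +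
        |(∫ z₂, pk t a.2 z₂ * q z₂ ∂μ) - ∫ z₂, pk t b.2 z₂ * q z₂ ∂μ| := by rw [d1, d2]
    _ ≤ C * sg (β₁ - α₁) (β₂ - α₂) (dist a.1 b.1) / S * (eLpNorm g ⊤ μ).toReal +
        C * sg (β₁ - α₁) (β₂ - α₂) (dist a.2 b.2) / S * (eLpNorm q ⊤ μ).toReal :=
      add_le_add h1 h2
    _ ≤ C * sg (β₁ - α₁) (β₂ - α₂) D / S * M + C * sg (β₁ - α₁) (β₂ - α₂) D / S * M :=
      add_le_add hterm1 hterm2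
    _ = 2 * C * sg (β₁ - α₁) (β₂ - α₂) D / S * M := by ring
end

section
/- Let q(x,y) be a nonnegative, symmetric, measurable kernel on X×X with ∫_X q(x,y) dμ(y) = 1 for all x, and set Q g(x) = ∫_X q(x,y) g(y) dμ(y). For every μ-a.e. nonnegative f ∈ L^1(X,μ) and every nonnegative g ∈ L^∞(X,μ), writing S_λ(f) = {x ∈ X : f(x) > λ}: ∫_X∫_X g(y) q(x,y) |f(x) − f(y)| dμ(y) dμ(x) ≤ ∫_0^∞ ( ‖Q(g·1_{S_λ(f)}) − g·1_{S_λ(f)}‖_{L^1(X,μ)} + ‖Q(g·1_{X∖S_λ(f)}) − g·1_{X∖S_λ(f)}‖_{L^1(X,μ)} ) dλ. In particular, for g ≡ 1: ∫_X∫_X q(x,y) |f(x) − f(y)| dμ(y) dμ(x) ≤ 2 ∫_0^∞ ‖Q(1_{S_λ(f)}) − 1_{S_λ(f)}‖_{L^1(X,μ)} dλ. -/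
open MeasureTheory Filter Set ENNReal Topology

private lemma setEq_aux {a b : ℝ} (hab : a ≤ b) :
    {r : ℝ | (r < a) ≠ (r < b)} = Ico a b := by
  ext r
  simp only [mem_setOf_eq, mem_Ico, ne_eq, eq_iff_iff, not_iff]
  constructor
  · intro h
    rcases lt_or_ge r a with h1 | h1
    · exact absurd h1 (h.2 (h1.trans_le hab))
    · exact ⟨h1, h.1 (not_lt.2 h1)⟩
  · rintro ⟨h1, h2⟩
    exact iff_of_true (not_lt.2 h1) h2
private lemma setEq (a b : ℝ) : {r : ℝ | (r < a) ≠ (r < b)} = Ico (min a b) (max a b) := by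
  rcases le_total a b with h | h
  · rw [min_eq_left h, max_eq_right h, setEq_aux h]
  · rw [min_eq_right h, max_eq_left h, ← setEq_aux h]
    ext r; simp only [mem_setOf_eq, ne_eq]; tauto

private lemma lc {a b : ℝ} (ha : 0 ≤ a) (hb : 0 ≤ b) :
    ∫⁻ l in Ioi (0:ℝ), {r : ℝ | (r < a) ≠ (r < b)}.indicator (fun _ => (1:ℝ≥0∞)) l
      = ENNReal.ofReal |a - b| := by
  rw [setEq, lintegral_indicator measurableSet_Ico, setLIntegral_one,
    Measure.restrict_apply measurableSet_Ico]
  have hm : 0 ≤ min a b := le_min ha hb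
  have habs : max a b - min a b = |a - b| := by
    rw [max_sub_min_eq_abs, abs_sub_comm]
  rcases hm.eq_or_lt with h0 | h0
  · have : Ico (min a b) (max a b) ∩ Ioi 0 = Ioo 0 (max a b) := by
      ext r
      simp only [mem_inter_iff, mem_Ico, mem_Ioi, mem_Ioo, ← h0]
      constructor
      · rintro ⟨⟨_, h2⟩, h3⟩; exact ⟨h3, h2⟩
      · rintro ⟨h1, h2⟩; exact ⟨⟨h1.le, h2⟩, h1⟩
    rw [this, Real.volume_Ioo, ← habs, ← h0, sub_zero]
  · have : Ico (min a b) (max a b) ∩ Ioi 0 = Ico (min a b) (max a b) :=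
      inter_eq_left.2 fun r hr => h0.trans_le hr.1
    rw [this, Real.volume_Ico, habs]

private lemma step {X : Type*} [MeasurableSpace X] (μ : Measure X)
    (q : X → X → ℝ) (hq_meas : Measurable (Function.uncurry q))
    (hq_nonneg : ∀ x y, 0 ≤ q x y)
    (hq_int : ∀ x, Integrable (q x) μ)
    (g' : X → ℝ) (hg'm : Measurable g') (hg'0 : ∀ x, 0 ≤ g' x)
    {C : ℝ} (hC : ∀ᵐ y ∂μ, ‖g' y‖ ≤ C)
    (T U : Set X) (hT : MeasurableSet T) (hU : MeasurableSet U) (hd : Disjoint T U) :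
    ∫⁻ x in T, ∫⁻ y in U, ENNReal.ofReal (q x y) * ENNReal.ofReal (g' y) ∂μ ∂μ
      ≤ eLpNorm (fun x => (∫ y, q x y * (U.indicator g') y ∂μ) - U.indicator g' x) 1 μ := by
  rw [eLpNorm_one_eq_lintegral_enorm]
  have hint : ∀ x, Integrable (fun y => q x y * (U.indicator g') y) μ := by
    intro x
    refine Integrable.mono' (g := fun y => q x y * C) ((hq_int x).mul_const C) ?_ ?_
    · exact ((hq_meas.of_uncurry_left).mul (hg'm.indicator hU)).aestronglyMeasurable
    · filter_upwards [hC] with y hCy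
      have h1 : |U.indicator g' y| ≤ |g' y| := by
        by_cases hy : y ∈ U <;> simp [hy, indicator_of_mem, indicator_of_notMem, abs_nonneg]
      calc ‖q x y * U.indicator g' y‖ = |q x y| * |U.indicator g' y| := abs_mul _ _
        _ ≤ q x y * C := by
            rw [abs_of_nonneg (hq_nonneg x y)]
            exact mul_le_mul_of_nonneg_left (h1.trans hCy) (hq_nonneg x y)
  calc ∫⁻ x in T, ∫⁻ y in U, ENNReal.ofReal (q x y) * ENNReal.ofReal (g' y) ∂μ ∂μ
      ≤ ∫⁻ x in T, ‖(∫ y, q x y * (U.indicator g') y ∂μ) - U.indicator g' x‖ₑ ∂μ := by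
        refine setLIntegral_mono' hT fun x hx => ?_
        have hx0 : U.indicator g' x = 0 :=
          indicator_of_notMem (disjoint_left.1 hd hx) _
        rw [hx0, sub_zero]
        have heq : ENNReal.ofReal (∫ y, q x y * (U.indicator g') y ∂μ)
            = ∫⁻ y in U, ENNReal.ofReal (q x y) * ENNReal.ofReal (g' y) ∂μ := by
          rw [ofReal_integral_eq_lintegral_ofReal (hint x)
            (Filter.Eventually.of_forall fun y =>
              mul_nonneg (hq_nonneg x y) (indicator_nonneg (fun z _ => hg'0 z) y))]
          rw [← lintegral_indicator hU]
          congr 1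
          ext y
          by_cases hy : y ∈ U <;>
            simp [hy, ENNReal.ofReal_mul (hq_nonneg x y)]
        rw [← heq]
        exact Real.ofReal_le_enorm _
    _ ≤ ∫⁻ x, ‖(∫ y, q x y * (U.indicator g') y ∂μ) - U.indicator g' x‖ₑ ∂μ :=
        setLIntegral_le_lintegral _ _

private lemma stepC {X : Type*} [MeasurableSpace X] (μ : Measure X) [SigmaFinite μ]
    (w : X → X → ℝ≥0∞) (hw : Measurable fun p : X × X => w p.1 p.2)
    (S : Set X) (hS : MeasurableSet S) :
    ∫⁻ x, ∫⁻ y, w x y * (S.indicator (fun _ => (1:ℝ≥0∞)) x * Sᶜ.indicator (fun _ => 1) y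
        + Sᶜ.indicator (fun _ => 1) x * S.indicator (fun _ => 1) y) ∂μ ∂μ
      = (∫⁻ x in S, ∫⁻ y in Sᶜ, w x y ∂μ ∂μ) + ∫⁻ x in Sᶜ, ∫⁻ y in S, w x y ∂μ ∂μ := by
  have key : ∀ x, ∫⁻ y, w x y * (S.indicator (fun _ => (1:ℝ≥0∞)) x * Sᶜ.indicator (fun _ => 1) y
        + Sᶜ.indicator (fun _ => 1) x * S.indicator (fun _ => 1) y) ∂μ
      = S.indicator (fun x => ∫⁻ y in Sᶜ, w x y ∂μ) x
        + Sᶜ.indicator (fun x => ∫⁻ y in S, w x y ∂μ) x := by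
    intro x
    by_cases hx : x ∈ S
    · have h1 : ∀ y, w x y * (S.indicator (fun _ => (1:ℝ≥0∞)) x * Sᶜ.indicator (fun _ => 1) y
          + Sᶜ.indicator (fun _ => 1) x * S.indicator (fun _ => 1) y) = Sᶜ.indicator (w x) y := by
        intro y
        by_cases hy : y ∈ S <;> simp [indicator_apply, hx, hy]
      rw [lintegral_congr h1, lintegral_indicator hS.compl, indicator_of_mem hx,
        indicator_of_notMem (by simp [hx] : x ∉ Sᶜ), add_zero]
    · have h1 : ∀ y, w x y * (S.indicator (fun _ => (1:ℝ≥0∞)) x * Sᶜ.indicator (fun _ => 1) y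
          + Sᶜ.indicator (fun _ => 1) x * S.indicator (fun _ => 1) y) = S.indicator (w x) y := by
        intro y
        by_cases hy : y ∈ S <;> simp [indicator_apply, hx, hy]
      rw [lintegral_congr h1, lintegral_indicator hS, indicator_of_notMem hx,
        indicator_of_mem (mem_compl hx), zero_add]
  rw [lintegral_congr key,
    lintegral_add_left ((Measurable.lintegral_prod_right' (ν := μ.restrict Sᶜ) hw).indicator hS),
    lintegral_indicator hS, lintegral_indicator hS.compl]

section
variable {X : Type*} [MeasurableSpace X] (μ : Measure X) [SigmaFinite μ]

private lemma part1
    (q : X → X → ℝ) (hq_meas : Measurable (Function.uncurry q))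
    (hq_nonneg : ∀ x y, 0 ≤ q x y)
    (hq_cons : ∀ x, (∫⁻ y, ENNReal.ofReal (q x y) ∂μ) = 1)
    (f : X → ℝ) (hf : MemLp f 1 μ) (hf0 : 0 ≤ᵐ[μ] f)
    (g : X → ℝ) (hg : MemLp g ⊤ μ) (hg0 : ∀ x, 0 ≤ g x) :
    (∫⁻ x, ∫⁻ y, ENNReal.ofReal (g y) * ENNReal.ofReal (q x y) *
        ENNReal.ofReal |f x - f y| ∂μ ∂μ)
      ≤ ∫⁻ l in Ioi (0:ℝ),
          (eLpNorm (fun x => (∫ y, q x y * (({z | l < f z}).indicator g) y ∂μ) -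
              ({z | l < f z}).indicator g x) 1 μ +
           eLpNorm (fun x => (∫ y, q x y * (({z | l < f z}ᶜ).indicator g) y ∂μ) -
              ({z | l < f z}ᶜ).indicator g x) 1 μ) := by
  classical
  -- measurable nonneg representatives
  set f' : X → ℝ := fun x => max (hf.1.mk f x) 0 with hf'def
  have hf'm : Measurable f' := (hf.1.measurable_mk).max measurable_const
  have hf'0 : ∀ x, 0 ≤ f' x := fun x => le_max_right _ _
  have hff' : f =ᵐ[μ] f' := by
    filter_upwards [hf.1.ae_eq_mk, hf0] with x h1 h2
    have : f' x = max (AEStronglyMeasurable.mk f hf.1 x) 0 := rfl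
    rw [this, ← h1]
    exact (max_eq_left h2).symm
  set g' : X → ℝ := fun x => max (hg.1.mk g x) 0 with hg'def
  have hg'm : Measurable g' := (hg.1.measurable_mk).max measurable_const
  have hg'0 : ∀ x, 0 ≤ g' x := fun x => le_max_right _ _
  have hgg' : g =ᵐ[μ] g' := by
    filter_upwards [hg.1.ae_eq_mk] with x h1
    simp only [hg'def, ← h1, max_eq_left (hg0 x)]
  -- essential bound on g'
  set C : ℝ := (eLpNormEssSup g μ).toReal with hCdef
  have hEtop : eLpNormEssSup g μ ≠ ⊤ := by
    have := hg.2
    rwa [eLpNorm_exponent_top, lt_top_iff_ne_top] at this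
  have hC : ∀ᵐ y ∂μ, ‖g' y‖ ≤ C := by
    filter_upwards [ae_le_eLpNormEssSup (f := g) (μ := μ), hgg'] with y h1 h2
    rw [← h2]
    calc ‖g y‖ = ((‖g y‖₊ : ℝ≥0∞)).toReal := by simp
      _ ≤ C := ENNReal.toReal_mono hEtop h1
  -- integrability of q x ·
  have hq_int : ∀ x, Integrable (q x) μ := by
    intro x
    refine ⟨(hq_meas.of_uncurry_left).aestronglyMeasurable, ?_⟩
    rw [hasFiniteIntegral_iff_ofReal (Filter.Eventually.of_forall (hq_nonneg x)), hq_cons x]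
    exact one_lt_top
  -- kernel w
  set w : X → X → ℝ≥0∞ := fun x y => ENNReal.ofReal (q x y) * ENNReal.ofReal (g' y)
    with hwdef
  have hqm2 : Measurable fun p : X × X => q p.1 p.2 := hq_meas
  have hw : Measurable fun p : X × X => w p.1 p.2 :=
    (ENNReal.measurable_ofReal.comp hqm2).mul
      (ENNReal.measurable_ofReal.comp (hg'm.comp measurable_snd))
  -- superlevel sets
  set S : ℝ → Set X := fun l => {z | l < f' z} with hSdef
  have hS : ∀ l, MeasurableSet (S l) := fun l => measurableSet_lt measurable_const hf'm
  -- a.e. equality of indicators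
  have hind : ∀ l : ℝ, ({z | l < f z}).indicator g =ᵐ[μ] (S l).indicator g' := by
    intro l
    filter_upwards [hff', hgg'] with y h1 h2
    simp only [indicator_apply, mem_setOf_eq, hSdef, h1, h2]
  have hindc : ∀ l : ℝ, ({z | l < f z}ᶜ).indicator g =ᵐ[μ] (S l)ᶜ.indicator g' := by
    intro l
    filter_upwards [hff', hgg'] with y h1 h2
    simp only [indicator_apply, mem_compl_iff, mem_setOf_eq, hSdef, h1, h2]
  -- Step 1: replace by representatives, reorder product
  have e1 : (∫⁻ x, ∫⁻ y, ENNReal.ofReal (g y) * ENNReal.ofReal (q x y) *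
        ENNReal.ofReal |f x - f y| ∂μ ∂μ)
      = ∫⁻ x, ∫⁻ y, w x y * ENNReal.ofReal |f' x - f' y| ∂μ ∂μ := by
    refine lintegral_congr_ae ?_
    filter_upwards [hff'] with x hx
    refine lintegral_congr_ae ?_
    filter_upwards [hff', hgg'] with y hy1 hy2
    rw [hx, hy1, hy2, hwdef]
    ring
  -- Step 2: to the product space
  have hWmeas : Measurable fun p : X × X => w p.1 p.2 * ENNReal.ofReal |f' p.1 - f' p.2| :=
    hw.mul (ENNReal.measurable_ofReal.comp
      (((hf'm.comp measurable_fst).sub (hf'm.comp measurable_snd)).abs))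
  have e2 : (∫⁻ x, ∫⁻ y, w x y * ENNReal.ofReal |f' x - f' y| ∂μ ∂μ)
      = ∫⁻ p : X × X, w p.1 p.2 * ENNReal.ofReal |f' p.1 - f' p.2| ∂(μ.prod μ) :=
    (lintegral_prod _ hWmeas.aemeasurable).symm
  -- layer cake pointwise
  have lcpt : ∀ p : X × X, ENNReal.ofReal |f' p.1 - f' p.2|
      = ∫⁻ l in Ioi (0:ℝ), {r : ℝ | (r < f' p.1) ≠ (r < f' p.2)}.indicator
          (fun _ => (1:ℝ≥0∞)) l := fun p => (lc (hf'0 p.1) (hf'0 p.2)).symm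
  have e3 : (∫⁻ p : X × X, w p.1 p.2 * ENNReal.ofReal |f' p.1 - f' p.2| ∂(μ.prod μ))
      = ∫⁻ p : X × X, ∫⁻ l in Ioi (0:ℝ), w p.1 p.2 *
          ({r : ℝ | (r < f' p.1) ≠ (r < f' p.2)}.indicator (fun _ => (1:ℝ≥0∞)) l)
          ∂(volume) ∂(μ.prod μ) := by
    refine lintegral_congr fun p => ?_
    rw [lcpt p, ← lintegral_const_mul' _ _ (by
      exact mul_ne_top ofReal_ne_top ofReal_ne_top)]
  -- measurability of the big function on (X×X)×ℝ
  have hA : MeasurableSet {pl : (X × X) × ℝ | pl.2 < f' pl.1.1} :=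
    measurableSet_lt measurable_snd (hf'm.comp (measurable_fst.comp measurable_fst))
  have hB : MeasurableSet {pl : (X × X) × ℝ | pl.2 < f' pl.1.2} :=
    measurableSet_lt measurable_snd (hf'm.comp (measurable_snd.comp measurable_fst))
  have hEset : MeasurableSet {pl : (X × X) × ℝ | (pl.2 < f' pl.1.1) ≠ (pl.2 < f' pl.1.2)} := by
    have : {pl : (X × X) × ℝ | (pl.2 < f' pl.1.1) ≠ (pl.2 < f' pl.1.2)}
        = ({pl : (X × X) × ℝ | pl.2 < f' pl.1.1} \ {pl | pl.2 < f' pl.1.2})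
          ∪ ({pl | pl.2 < f' pl.1.2} \ {pl | pl.2 < f' pl.1.1}) := by
      ext pl
      simp only [mem_setOf_eq, mem_union, mem_diff, ne_eq, eq_iff_iff]
      tauto
    rw [this]
    exact (hA.diff hB).union (hB.diff hA)
  have hFm : Measurable (Function.uncurry fun (p : X × X) (l : ℝ) =>
      w p.1 p.2 * ({r : ℝ | (r < f' p.1) ≠ (r < f' p.2)}.indicator (fun _ => (1:ℝ≥0∞)) l)) := by
    have h1 : (Function.uncurry fun (p : X × X) (l : ℝ) =>
        w p.1 p.2 * ({r : ℝ | (r < f' p.1) ≠ (r < f' p.2)}.indicator (fun _ => (1:ℝ≥0∞)) l))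
        = fun pl : (X × X) × ℝ => w pl.1.1 pl.1.2 *
            ({pl : (X × X) × ℝ | (pl.2 < f' pl.1.1) ≠ (pl.2 < f' pl.1.2)}.indicator
              (fun _ => (1:ℝ≥0∞)) pl) := by
      ext pl
      simp only [Function.uncurry, indicator_apply, mem_setOf_eq]
    rw [h1]
    exact (hw.comp measurable_fst).mul (measurable_const.indicator hEset)
  -- Step 3: swap integrals
  have e4 : (∫⁻ p : X × X, ∫⁻ l in Ioi (0:ℝ), w p.1 p.2 *
          ({r : ℝ | (r < f' p.1) ≠ (r < f' p.2)}.indicator (fun _ => (1:ℝ≥0∞)) l)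
          ∂(volume) ∂(μ.prod μ))
      = ∫⁻ l in Ioi (0:ℝ), ∫⁻ p : X × X, w p.1 p.2 *
          ({r : ℝ | (r < f' p.1) ≠ (r < f' p.2)}.indicator (fun _ => (1:ℝ≥0∞)) l)
          ∂(μ.prod μ) ∂(volume) :=
    lintegral_lintegral_swap hFm.aemeasurable
  -- per-l identity
  have e5 : ∀ l : ℝ, (∫⁻ p : X × X, w p.1 p.2 *
          ({r : ℝ | (r < f' p.1) ≠ (r < f' p.2)}.indicator (fun _ => (1:ℝ≥0∞)) l) ∂(μ.prod μ))
      = (∫⁻ x in S l, ∫⁻ y in (S l)ᶜ, w x y ∂μ ∂μ)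
        + ∫⁻ x in (S l)ᶜ, ∫⁻ y in S l, w x y ∂μ ∂μ := by
    intro l
    have hsec : Measurable fun p : X × X => w p.1 p.2 *
        ({r : ℝ | (r < f' p.1) ≠ (r < f' p.2)}.indicator (fun _ => (1:ℝ≥0∞)) l) := by
      have h := hFm.comp (measurable_prodMk_right (y := l))
      exact h
    rw [lintegral_prod _ hsec.aemeasurable]
    rw [← stepC μ w hw (S l) (hS l)]
    refine lintegral_congr fun x => lintegral_congr fun y => ?_
    congr 1
    by_cases hx : l < f' x <;> by_cases hy : l < f' y <;>
      simp [indicator_apply, hSdef, mem_setOf_eq, mem_compl_iff, hx, hy]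
  -- per-l bounds
  have e6 : ∀ l : ℝ,
      (∫⁻ x in S l, ∫⁻ y in (S l)ᶜ, w x y ∂μ ∂μ)
        + (∫⁻ x in (S l)ᶜ, ∫⁻ y in S l, w x y ∂μ ∂μ)
      ≤ eLpNorm (fun x => (∫ y, q x y * (({z | l < f z}).indicator g) y ∂μ) -
              ({z | l < f z}).indicator g x) 1 μ +
        eLpNorm (fun x => (∫ y, q x y * (({z | l < f z}ᶜ).indicator g) y ∂μ) -
              ({z | l < f z}ᶜ).indicator g x) 1 μ := by
    intro l
    have hc1 : eLpNorm (fun x => (∫ y, q x y * (({z | l < f z}).indicator g) y ∂μ) -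
        ({z | l < f z}).indicator g x) 1 μ
        = eLpNorm (fun x => (∫ y, q x y * ((S l).indicator g') y ∂μ) -
            (S l).indicator g' x) 1 μ := by
      refine eLpNorm_congr_ae ?_
      filter_upwards [hind l] with x hx
      rw [hx, integral_congr_ae ?_]
      filter_upwards [hind l] with y hy
      rw [hy]
    have hc2 : eLpNorm (fun x => (∫ y, q x y * (({z | l < f z}ᶜ).indicator g) y ∂μ) -
        ({z | l < f z}ᶜ).indicator g x) 1 μ
        = eLpNorm (fun x => (∫ y, q x y * ((S l)ᶜ.indicator g') y ∂μ) -
            (S l)ᶜ.indicator g' x) 1 μ := by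
      refine eLpNorm_congr_ae ?_
      filter_upwards [hindc l] with x hx
      rw [hx, integral_congr_ae ?_]
      filter_upwards [hindc l] with y hy
      rw [hy]
    rw [hc1, hc2, add_comm (eLpNorm _ 1 μ)]
    exact add_le_add
      (step μ q hq_meas hq_nonneg hq_int g' hg'm hg'0 hC (S l) ((S l)ᶜ)
        (hS l) (hS l).compl disjoint_compl_right)
      (step μ q hq_meas hq_nonneg hq_int g' hg'm hg'0 hC ((S l)ᶜ) (S l)
        (hS l).compl (hS l) disjoint_compl_left)
  rw [e1, e2, e3, e4]
  exact lintegral_mono fun l => le_trans (le_of_eq (e5 l)) (e6 l)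

end
theorem stmt13 {X : Type*} [MeasurableSpace X] (μ : Measure X) [SigmaFinite μ]
    (q : X → X → ℝ) (hq_meas : Measurable (Function.uncurry q))
    (hq_nonneg : ∀ x y, 0 ≤ q x y) (hq_symm : ∀ x y, q x y = q y x)
    (hq_cons : ∀ x, (∫⁻ y, ENNReal.ofReal (q x y) ∂μ) = 1)
    (f : X → ℝ) (hf : MemLp f 1 μ) (hf0 : 0 ≤ᵐ[μ] f)
    (g : X → ℝ) (hg : MemLp g ⊤ μ) (hg0 : ∀ x, 0 ≤ g x) :
    ((∫⁻ x, ∫⁻ y, ENNReal.ofReal (g y) * ENNReal.ofReal (q x y) *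
        ENNReal.ofReal |f x - f y| ∂μ ∂μ)
      ≤ ∫⁻ l in Ioi (0:ℝ),
          (eLpNorm (fun x => (∫ y, q x y * (({z | l < f z}).indicator g) y ∂μ) -
              ({z | l < f z}).indicator g x) 1 μ +
           eLpNorm (fun x => (∫ y, q x y * (({z | l < f z}ᶜ).indicator g) y ∂μ) -
              ({z | l < f z}ᶜ).indicator g x) 1 μ)) ∧
    ((∫⁻ x, ∫⁻ y, ENNReal.ofReal (q x y) * ENNReal.ofReal |f x - f y| ∂μ ∂μ)
      ≤ 2 * ∫⁻ l in Ioi (0:ℝ),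
          eLpNorm (fun x =>
            (∫ y, q x y * (({z | l < f z}).indicator fun _ => (1:ℝ)) y ∂μ) -
              ({z | l < f z}).indicator (fun _ => (1:ℝ)) x) 1 μ) := by
  constructor
  · exact part1 μ q hq_meas hq_nonneg hq_cons f hf hf0 g hg hg0
  · have h1 := part1 μ q hq_meas hq_nonneg hq_cons f hf hf0 (fun _ => (1:ℝ))
      (memLp_top_const 1) (fun _ => zero_le_one)
    simp only [ENNReal.ofReal_one, one_mul] at h1
    refine h1.trans ?_
    -- integrability of the kernel sections and total mass one
    have hq_int : ∀ x, Integrable (q x) μ := by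
      intro x
      refine ⟨(hq_meas.of_uncurry_left).aestronglyMeasurable, ?_⟩
      rw [hasFiniteIntegral_iff_ofReal (Filter.Eventually.of_forall (hq_nonneg x)), hq_cons x]
      exact one_lt_top
    have hqsum : ∀ x, ∫ y, q x y ∂μ = 1 := by
      intro x
      have h := hq_cons x
      rw [← ofReal_integral_eq_lintegral_ofReal (hq_int x)
        (Filter.Eventually.of_forall (hq_nonneg x))] at h
      exact ENNReal.ofReal_eq_one.mp h
    -- measurable representative of f
    set f' : X → ℝ := fun x => max (hf.1.mk f x) 0 with hf'def
    have hf'm : Measurable f' := (hf.1.measurable_mk).max measurable_const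
    have hff' : f =ᵐ[μ] f' := by
      filter_upwards [hf.1.ae_eq_mk, hf0] with x h1 h2
      have : f' x = max (AEStronglyMeasurable.mk f hf.1 x) 0 := rfl
      rw [this, ← h1]
      exact (max_eq_left h2).symm
    set S : ℝ → Set X := fun l => {z | l < f' z} with hSdef
    have hS : ∀ l, MeasurableSet (S l) := fun l => measurableSet_lt measurable_const hf'm
    have hind : ∀ l : ℝ, ({z | l < f z}).indicator (fun _ => (1:ℝ))
        =ᵐ[μ] (S l).indicator (fun _ => (1:ℝ)) := by
      intro l
      filter_upwards [hff'] with y h1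
      simp only [indicator_apply, mem_setOf_eq, hSdef, h1]
    have hindc : ∀ l : ℝ, ({z | l < f z}ᶜ).indicator (fun _ => (1:ℝ))
        =ᵐ[μ] (S l)ᶜ.indicator (fun _ => (1:ℝ)) := by
      intro l
      filter_upwards [hff'] with y h1
      simp only [indicator_apply, mem_compl_iff, mem_setOf_eq, hSdef, h1]
    -- the two eLpNorm terms coincide
    have hE : ∀ l : ℝ,
        eLpNorm (fun x => (∫ y, q x y * (({z | l < f z}ᶜ).indicator (fun _ => (1:ℝ))) y ∂μ) -
            ({z | l < f z}ᶜ).indicator (fun _ => (1:ℝ)) x) 1 μ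
        = eLpNorm (fun x => (∫ y, q x y * (({z | l < f z}).indicator (fun _ => (1:ℝ))) y ∂μ) -
            ({z | l < f z}).indicator (fun _ => (1:ℝ)) x) 1 μ := by
      intro l
      have hint : ∀ x, Integrable (fun y => q x y * (S l).indicator (fun _ => (1:ℝ)) y) μ := by
        intro x
        refine Integrable.mono' (hq_int x)
          ((hq_meas.of_uncurry_left).mul (measurable_const.indicator (hS l))).aestronglyMeasurable
          (Filter.Eventually.of_forall fun y => ?_)
        have h2 : |Set.indicator (S l) (fun _ => (1:ℝ)) y| ≤ 1 := by
          by_cases hy : y ∈ S l <;> simp [hy]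
        calc ‖q x y * (S l).indicator (fun _ => (1:ℝ)) y‖
            = |q x y| * |(S l).indicator (fun _ => (1:ℝ)) y| := abs_mul _ _
          _ ≤ |q x y| * 1 := mul_le_mul_of_nonneg_left h2 (abs_nonneg _)
          _ = q x y := by rw [mul_one, abs_of_nonneg (hq_nonneg x y)]
      have hc1 : eLpNorm (fun x => (∫ y, q x y * (({z | l < f z}).indicator (fun _ => (1:ℝ))) y ∂μ) -
          ({z | l < f z}).indicator (fun _ => (1:ℝ)) x) 1 μ
          = eLpNorm (fun x => (∫ y, q x y * ((S l).indicator (fun _ => (1:ℝ))) y ∂μ) -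
              (S l).indicator (fun _ => (1:ℝ)) x) 1 μ := by
        refine eLpNorm_congr_ae ?_
        filter_upwards [hind l] with x hx
        rw [hx, integral_congr_ae ?_]
        filter_upwards [hind l] with y hy
        rw [hy]
      have hc2 : eLpNorm (fun x => (∫ y, q x y * (({z | l < f z}ᶜ).indicator (fun _ => (1:ℝ))) y ∂μ) -
          ({z | l < f z}ᶜ).indicator (fun _ => (1:ℝ)) x) 1 μ
          = eLpNorm (fun x => (∫ y, q x y * ((S l)ᶜ.indicator (fun _ => (1:ℝ))) y ∂μ) -
              (S l)ᶜ.indicator (fun _ => (1:ℝ)) x) 1 μ := by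
        refine eLpNorm_congr_ae ?_
        filter_upwards [hindc l] with x hx
        rw [hx, integral_congr_ae ?_]
        filter_upwards [hindc l] with y hy
        rw [hy]
      rw [hc1, hc2]
      have hfun : (fun x => (∫ y, q x y * ((S l)ᶜ.indicator (fun _ => (1:ℝ))) y ∂μ) -
          (S l)ᶜ.indicator (fun _ => (1:ℝ)) x)
          = fun x => -((∫ y, q x y * ((S l).indicator (fun _ => (1:ℝ))) y ∂μ) -
              (S l).indicator (fun _ => (1:ℝ)) x) := by
        funext x
        have hcompl : ∀ y, ((S l)ᶜ.indicator (fun _ => (1:ℝ)) y)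
            = 1 - (S l).indicator (fun _ => (1:ℝ)) y := by
          intro y; by_cases hy : y ∈ S l <;> simp [hy]
        have hI : (∫ y, q x y * ((S l)ᶜ.indicator (fun _ => (1:ℝ))) y ∂μ)
            = 1 - ∫ y, q x y * ((S l).indicator (fun _ => (1:ℝ))) y ∂μ := by
          rw [show (fun y => q x y * ((S l)ᶜ.indicator (fun _ => (1:ℝ))) y)
              = fun y => q x y - q x y * ((S l).indicator (fun _ => (1:ℝ))) y by
            funext y; rw [hcompl y]; ring]
          rw [integral_sub (hq_int x) (hint x), hqsum x]
        rw [hI, hcompl x]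
        ring
      rw [hfun]
      exact eLpNorm_neg _ _ _
    calc ∫⁻ l in Ioi (0:ℝ),
          (eLpNorm (fun x => (∫ y, q x y * (({z | l < f z}).indicator (fun _ => (1:ℝ))) y ∂μ) -
              ({z | l < f z}).indicator (fun _ => (1:ℝ)) x) 1 μ +
           eLpNorm (fun x => (∫ y, q x y * (({z | l < f z}ᶜ).indicator (fun _ => (1:ℝ))) y ∂μ) -
              ({z | l < f z}ᶜ).indicator (fun _ => (1:ℝ)) x) 1 μ)
        = ∫⁻ l in Ioi (0:ℝ), 2 *
            eLpNorm (fun x => (∫ y, q x y * (({z | l < f z}).indicator (fun _ => (1:ℝ))) y ∂μ) -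
              ({z | l < f z}).indicator (fun _ => (1:ℝ)) x) 1 μ := by
          refine lintegral_congr fun l => ?_
          rw [hE l, two_mul]
      _ = 2 * ∫⁻ l in Ioi (0:ℝ),
            eLpNorm (fun x => (∫ y, q x y * (({z | l < f z}).indicator (fun _ => (1:ℝ))) y ∂μ) -
              ({z | l < f z}).indicator (fun _ => (1:ℝ)) x) 1 μ :=
          lintegral_const_mul' _ _ (by norm_num)
      _ ≤ _ := le_rfl
end

section
/- Let p_t(x,y) (t>0) be a family of nonnegative jointly measurable kernels on X×X and let h : [0,∞) → [0,∞) be nondecreasing with h(0)=0 and h(t)>0 for t>0. Define Var_h(f) := liminf_{t→0+} h(t)^{-1} ∫_X∫_X |f(x)−f(y)| p_t(x,y) dμ(x) dμ(y). Then for every μ-a.e. nonnegative f ∈ L^1(X,μ): ∫_0^∞ Var_h(1_{S_λ(f)}) dλ ≤ Var_h(f), where S_λ(f) = {x ∈ X : f(x) > λ}. -/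
open MeasureTheory Filter Set ENNReal Topology

/-- The h-variation
`Var_h(f) = liminf_{t→0+} h(t)⁻¹ ∫∫ |f(x)−f(y)| p_t(x,y) dμ(x) dμ(y)`. -/
noncomputable def VarH {X : Type*} [MeasurableSpace X] (μ : Measure X)
    (pk : ℝ → X → X → ℝ) (h : ℝ → ℝ) (f : X → ℝ) : ℝ≥0∞ :=
  Filter.liminf (fun t => (ENNReal.ofReal (h t))⁻¹ *
    ∫⁻ x, ∫⁻ y, ENNReal.ofReal |f x - f y| * ENNReal.ofReal (pk t x y) ∂μ ∂μ)
    (𝓝[>] (0:ℝ))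


/-- Layer-cake for two points, ordered case. -/
lemma aux_lc_le (a b : ℝ) (hb : 0 ≤ b) (hba : b ≤ a) :
    (∫⁻ l in Ioi (0:ℝ),
        ENNReal.ofReal |(if l < a then (1:ℝ) else 0) - (if l < b then 1 else 0)|)
      = ENNReal.ofReal (a - b) := by
  have hpt : (fun l => ENNReal.ofReal
        |(if l < a then (1:ℝ) else 0) - (if l < b then 1 else 0)|)
      = (Ico b a).indicator (fun _ => (1:ℝ≥0∞)) := by
    funext l
    by_cases h1 : l < b
    · simp [h1, lt_of_lt_of_le h1 hba, Set.indicator_apply, Set.mem_Ico, not_le.mpr h1]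
    · by_cases h2 : l < a
      · simp [h1, h2, Set.indicator_apply, Set.mem_Ico, not_lt.mp h1]
      · simp [h1, h2, Set.indicator_apply, Set.mem_Ico]
  rw [hpt, lintegral_indicator measurableSet_Ico, setLIntegral_one,
    Measure.restrict_apply measurableSet_Ico]
  apply le_antisymm
  · calc volume (Ico b a ∩ Ioi 0) ≤ volume (Ico b a) := measure_mono inter_subset_left
      _ = ENNReal.ofReal (a - b) := Real.volume_Ico
  · calc ENNReal.ofReal (a - b) = volume (Ioo b a) := Real.volume_Ioo.symm
      _ ≤ volume (Ico b a ∩ Ioi 0) := by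
          apply measure_mono
          intro x hx
          exact ⟨⟨le_of_lt hx.1, hx.2⟩, lt_of_le_of_lt hb hx.1⟩

/-- Layer-cake for two points. -/
lemma aux_lc (a b : ℝ) (ha : 0 ≤ a) (hb : 0 ≤ b) :
    (∫⁻ l in Ioi (0:ℝ),
        ENNReal.ofReal |(if l < a then (1:ℝ) else 0) - (if l < b then 1 else 0)|)
      = ENNReal.ofReal |a - b| := by
  rcases le_total b a with hba | hab
  · rw [aux_lc_le a b hb hba, abs_of_nonneg (sub_nonneg.mpr hba)]
  · have : ∀ l : ℝ, |(if l < a then (1:ℝ) else 0) - (if l < b then 1 else 0)|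
        = |(if l < b then (1:ℝ) else 0) - (if l < a then 1 else 0)| := fun l => abs_sub_comm _ _
    simp_rw [this]
    rw [aux_lc_le b a ha hab, abs_of_nonpos (sub_nonpos.mpr hab), neg_sub]

/-- Joint measurability of the integrand. -/
lemma aux_meas {X : Type*} [MeasurableSpace X] (g : X → ℝ) (hg : Measurable g)
    (p : X → X → ℝ) (hp : Measurable (Function.uncurry p)) :
    Measurable (fun q : ℝ × X × X =>
      ENNReal.ofReal |(if q.1 < g q.2.1 then (1:ℝ) else 0) - (if q.1 < g q.2.2 then 1 else 0)| *
        ENNReal.ofReal (p q.2.1 q.2.2)) := by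
  apply Measurable.fun_mul
  · apply Measurable.ennreal_ofReal
    apply Measurable.abs
    apply Measurable.sub
    · exact Measurable.ite
        (measurableSet_lt measurable_fst (hg.comp (measurable_fst.comp measurable_snd)))
        measurable_const measurable_const
    · exact Measurable.ite
        (measurableSet_lt measurable_fst (hg.comp (measurable_snd.comp measurable_snd)))
        measurable_const measurable_const
  · exact Measurable.ennreal_ofReal (hp.comp measurable_snd)

set_option maxHeartbeats 1600000 in
/-- Measurability of the double integral as a function of the level. -/
lemma aux_Dmeas {X : Type*} [MeasurableSpace X] (μ : Measure X) [SigmaFinite μ]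
    (g : X → ℝ) (hg : Measurable g)
    (p : X → X → ℝ) (hp : Measurable (Function.uncurry p)) :
    Measurable (fun l : ℝ => ∫⁻ x, ∫⁻ y,
      ENNReal.ofReal |(if l < g x then (1:ℝ) else 0) - (if l < g y then 1 else 0)| *
        ENNReal.ofReal (p x y) ∂μ ∂μ) := by
  have hΦ := aux_meas g hg p hp
  have h1 : Measurable (fun q : (ℝ × X) × X =>
      ENNReal.ofReal |(if q.1.1 < g q.1.2 then (1:ℝ) else 0) - (if q.1.1 < g q.2 then 1 else 0)| *
        ENNReal.ofReal (p q.1.2 q.2)) :=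
    hΦ.comp ((measurable_fst.comp measurable_fst).prodMk
      ((measurable_snd.comp measurable_fst).prodMk measurable_snd))
  have h2 := h1.lintegral_prod_right' (ν := μ)
  exact h2.lintegral_prod_right' (ν := μ)

/-- Double integrals only depend on the a.e. class. -/
lemma aux_dbl {X : Type*} [MeasurableSpace X] (μ : Measure X)
    (F G : X → ℝ) (hFG : F =ᵐ[μ] G) (c : X → X → ℝ) :
    (∫⁻ x, ∫⁻ y, ENNReal.ofReal |F x - F y| * ENNReal.ofReal (c x y) ∂μ ∂μ)
      = ∫⁻ x, ∫⁻ y, ENNReal.ofReal |G x - G y| * ENNReal.ofReal (c x y) ∂μ ∂μ := by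
  apply lintegral_congr_ae
  filter_upwards [hFG] with x hx
  apply lintegral_congr_ae
  filter_upwards [hFG] with y hy
  rw [hx, hy]

set_option maxHeartbeats 1600000 in
/-- Tonelli/coarea identity for a fixed kernel. -/
lemma aux_swap {X : Type*} [MeasurableSpace X] (μ : Measure X) [SigmaFinite μ]
    (g : X → ℝ) (hg : Measurable g) (hg0 : ∀ x, 0 ≤ g x)
    (p : X → X → ℝ) (hp : Measurable (Function.uncurry p)) :
    (∫⁻ l in Ioi (0:ℝ), ∫⁻ x, ∫⁻ y,
        ENNReal.ofReal |(if l < g x then (1:ℝ) else 0) - (if l < g y then 1 else 0)| *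
          ENNReal.ofReal (p x y) ∂μ ∂μ)
      = ∫⁻ x, ∫⁻ y, ENNReal.ofReal |g x - g y| * ENNReal.ofReal (p x y) ∂μ ∂μ := by
  have hΦ := aux_meas g hg p hp
  have h1 : Measurable (fun q : (ℝ × X) × X =>
      ENNReal.ofReal |(if q.1.1 < g q.1.2 then (1:ℝ) else 0) - (if q.1.1 < g q.2 then 1 else 0)| *
        ENNReal.ofReal (p q.1.2 q.2)) :=
    hΦ.comp ((measurable_fst.comp measurable_fst).prodMk
      ((measurable_snd.comp measurable_fst).prodMk measurable_snd))
  rw [lintegral_lintegral_swap (h1.lintegral_prod_right' (ν := μ)).aemeasurable]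
  apply lintegral_congr
  intro x
  have h2 : Measurable (fun q : ℝ × X =>
      ENNReal.ofReal |(if q.1 < g x then (1:ℝ) else 0) - (if q.1 < g q.2 then 1 else 0)| *
        ENNReal.ofReal (p x q.2)) :=
    hΦ.comp (measurable_fst.prodMk (measurable_const.prodMk measurable_snd))
  rw [lintegral_lintegral_swap h2.aemeasurable]
  apply lintegral_congr
  intro y
  rw [lintegral_mul_const' _ _ ofReal_ne_top, aux_lc (g x) (g y) (hg0 x) (hg0 y)]

theorem stmt14 {X : Type*} [MeasurableSpace X] (μ : Measure X) [SigmaFinite μ]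
    (pk : ℝ → X → X → ℝ)
    (hpk_meas : ∀ t > (0:ℝ), Measurable (Function.uncurry (pk t)))
    (hpk_nonneg : ∀ t > (0:ℝ), ∀ x y, 0 ≤ pk t x y)
    (h : ℝ → ℝ) (hmono : MonotoneOn h (Ici 0)) (h0 : h 0 = 0)
    (hpos : ∀ t > (0:ℝ), 0 < h t)
    (f : X → ℝ) (hf : MemLp f 1 μ) (hf0 : 0 ≤ᵐ[μ] f) :
    (∫⁻ l in Ioi (0:ℝ), VarH μ pk h (({z | l < f z}).indicator fun _ => (1:ℝ)))
      ≤ VarH μ pk h f := by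
  -- choose a measurable, everywhere-nonnegative representative g of f
  have hfm : AEMeasurable f μ := hf.aestronglyMeasurable.aemeasurable
  set g : X → ℝ := fun x => max (hfm.mk f x) 0 with hgdef
  have hgmeas : Measurable g := hfm.measurable_mk.max measurable_const
  have hg0 : ∀ x, 0 ≤ g x := fun x => le_max_right _ _
  have hfg : f =ᵐ[μ] g := by
    filter_upwards [hfm.ae_eq_mk, hf0] with x hx hx0
    rw [hgdef]
    simp only
    rw [← hx]
    exact (max_eq_left hx0).symm
  -- indicators agree a.e.
  have hind : ∀ l : ℝ, (({z | l < f z}).indicator fun _ => (1:ℝ))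
      =ᵐ[μ] fun x => if l < g x then (1:ℝ) else 0 := by
    intro l
    filter_upwards [hfg] with x hx
    simp only [Set.indicator_apply, Set.mem_setOf_eq, hx]
  -- the RHS written with g
  have hR : VarH μ pk h f = VarH μ pk h g := by
    unfold VarH
    apply Filter.liminf_congr
    apply Filter.Eventually.of_forall
    intro t
    rw [aux_dbl μ f g hfg (pk t)]
  -- the LHS integrand written with g
  have hL : ∀ l : ℝ, VarH μ pk h (({z | l < f z}).indicator fun _ => (1:ℝ))
      = Filter.liminf (fun t => (ENNReal.ofReal (h t))⁻¹ *
          ∫⁻ x, ∫⁻ y, ENNReal.ofReal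
            |(if l < g x then (1:ℝ) else 0) - (if l < g y then 1 else 0)| *
            ENNReal.ofReal (pk t x y) ∂μ ∂μ) (𝓝[>] (0:ℝ)) := by
    intro l
    unfold VarH
    apply Filter.liminf_congr
    apply Filter.Eventually.of_forall
    intro t
    rw [aux_dbl μ _ _ (hind l) (pk t)]
  rw [hR]
  set H : ℝ → ℝ≥0∞ := fun t => (ENNReal.ofReal (h t))⁻¹ *
    ∫⁻ x, ∫⁻ y, ENNReal.ofReal |g x - g y| * ENNReal.ofReal (pk t x y) ∂μ ∂μ with hHdef
  have hRg : VarH μ pk h g = Filter.liminf H (𝓝[>] (0:ℝ)) := rfl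
  rw [hRg]
  set L := Filter.liminf H (𝓝[>] (0:ℝ)) with hLdef
  apply ENNReal.le_of_forall_pos_le_add
  intro ε hε hLtop
  -- frequently H t < L + ε near 0⁺
  have hfreq : ∃ᶠ t in 𝓝[>] (0:ℝ), H t < L + ε := by
    by_contra hcon
    rw [Filter.not_frequently] at hcon
    have hle : L + ε ≤ L := by
      rw [hLdef]
      refine Filter.le_liminf_of_le (by isBoundedDefault) ?_
      filter_upwards [hcon] with t ht
      exact not_lt.mp ht
    have hlt : L < L + ε := ENNReal.lt_add_right hLtop.ne (by exact_mod_cast hε.ne')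
    exact absurd hle (not_le.mpr hlt)
  -- pick a sequence tending to 0⁺ along which H stays below L + ε
  obtain ⟨s, hs⟩ := (𝓝[>] (0:ℝ)).exists_antitone_basis
  have hchoice : ∀ n : ℕ, ∃ t : ℝ, (H t < L + ε) ∧ t ∈ s n ∩ Ioi 0 := by
    intro n
    have hmem : s n ∩ Ioi 0 ∈ 𝓝[>] (0:ℝ) :=
      Filter.inter_mem (hs.1.mem_of_mem trivial) self_mem_nhdsWithin
    exact (hfreq.and_eventually (Filter.eventually_of_mem hmem fun x hx => hx)).exists
  choose u hu1 hu2 using hchoice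
  have hupos : ∀ n, 0 < u n := fun n => (hu2 n).2
  have htend : Tendsto u atTop (𝓝[>] (0:ℝ)) := hs.tendsto fun n => (hu2 n).1
  -- main chain of inequalities
  calc (∫⁻ l in Ioi (0:ℝ), VarH μ pk h (({z | l < f z}).indicator fun _ => (1:ℝ)))
      = ∫⁻ l in Ioi (0:ℝ), Filter.liminf (fun t => (ENNReal.ofReal (h t))⁻¹ *
          ∫⁻ x, ∫⁻ y, ENNReal.ofReal
            |(if l < g x then (1:ℝ) else 0) - (if l < g y then 1 else 0)| *
            ENNReal.ofReal (pk t x y) ∂μ ∂μ) (𝓝[>] (0:ℝ)) := by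
        exact lintegral_congr fun l => hL l
    _ ≤ ∫⁻ l in Ioi (0:ℝ), Filter.liminf (fun n => (ENNReal.ofReal (h (u n)))⁻¹ *
          ∫⁻ x, ∫⁻ y, ENNReal.ofReal
            |(if l < g x then (1:ℝ) else 0) - (if l < g y then 1 else 0)| *
            ENNReal.ofReal (pk (u n) x y) ∂μ ∂μ) atTop := by
        apply lintegral_mono
        intro l
        have heq : (fun n => (ENNReal.ofReal (h (u n)))⁻¹ *
            ∫⁻ x, ∫⁻ y, ENNReal.ofReal
              |(if l < g x then (1:ℝ) else 0) - (if l < g y then 1 else 0)| *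
              ENNReal.ofReal (pk (u n) x y) ∂μ ∂μ)
            = (fun t => (ENNReal.ofReal (h t))⁻¹ *
            ∫⁻ x, ∫⁻ y, ENNReal.ofReal
              |(if l < g x then (1:ℝ) else 0) - (if l < g y then 1 else 0)| *
              ENNReal.ofReal (pk t x y) ∂μ ∂μ) ∘ u := rfl
        refine le_trans (Filter.liminf_le_liminf_of_le (u := fun t =>
            (ENNReal.ofReal (h t))⁻¹ * ∫⁻ x, ∫⁻ y, ENNReal.ofReal
              |(if l < g x then (1:ℝ) else 0) - (if l < g y then 1 else 0)| *
              ENNReal.ofReal (pk t x y) ∂μ ∂μ) htend) ?_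
        exact le_of_eq (Filter.liminf_comp _ u atTop).symm
    _ ≤ Filter.liminf (fun n => ∫⁻ l in Ioi (0:ℝ), (ENNReal.ofReal (h (u n)))⁻¹ *
          ∫⁻ x, ∫⁻ y, ENNReal.ofReal
            |(if l < g x then (1:ℝ) else 0) - (if l < g y then 1 else 0)| *
            ENNReal.ofReal (pk (u n) x y) ∂μ ∂μ) atTop := by
        apply lintegral_liminf_le
        intro n
        exact (aux_Dmeas μ g hgmeas (pk (u n)) (hpk_meas (u n) (hupos n))).const_mul _
    _ = Filter.liminf (fun n => H (u n)) atTop := by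
        apply Filter.liminf_congr
        apply Filter.Eventually.of_forall
        intro n
        have hne : (ENNReal.ofReal (h (u n)))⁻¹ ≠ ⊤ := by
          rw [ENNReal.inv_ne_top]
          exact (ENNReal.ofReal_pos.mpr (hpos (u n) (hupos n))).ne'
        rw [lintegral_const_mul' _ _ hne,
          aux_swap μ g hgmeas hg0 (pk (u n)) (hpk_meas (u n) (hupos n))]
    _ ≤ L + ε := by
        refine Filter.liminf_le_of_le (by isBoundedDefault) ?_
        intro b hb
        obtain ⟨n, hn⟩ := hb.exists
        exact le_trans hn (hu1 n).le
end

section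
/- Let C > 0, α_1, α_2 > 0 and β_1, β_2 > 1. There exists a constant c > 0 such that for every t > 0: ∫_0^∞ σ_{α_1,α_2}(u) · exp( −C t σ_{β_2/(β_2−1), β_1/(β_1−1)}(u/t) ) · du/u ≤ c · σ_{α_1/β_1, α_2/β_2}(t). -/
open Set Real MeasureTheory

set_option maxHeartbeats 1000000

lemma sg_nonneg {a b r : ℝ} (hr : 0 ≤ r) : 0 ≤ sg a b r := by
  unfold sg; split <;> positivity

lemma lint_gamma {a p b : ℝ} (ha : 0 < a) (hp : 1 ≤ p) (hb : 0 < b) :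
    ∫⁻ u in Ioi (0:ℝ), ENNReal.ofReal (u ^ (a-1) * Real.exp (-(b * u ^ p)))
      = ENNReal.ofReal (b ^ (-a/p) * (1/p) * Real.Gamma (a/p)) := by
  have hp0 : 0 < p := lt_of_lt_of_le one_pos hp
  rw [← MeasureTheory.ofReal_integral_eq_lintegral_ofReal]
  · have := integral_rpow_mul_exp_neg_mul_rpow hp0 (show (-1:ℝ) < a - 1 by linarith) hb
    simp_rw [neg_mul] at this
    rw [this]
    norm_num
  · have := integrableOn_rpow_mul_exp_neg_mul_rpow (show (-1:ℝ) < a-1 by linarith) hp0 hb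
    simp_rw [neg_mul] at this; exact this
  · filter_upwards [ae_restrict_mem measurableSet_Ioi] with u hu
    have : (0:ℝ) < u := hu
    positivity

lemma lint_pow_Ioc {a t : ℝ} (ha : 0 < a) (ht : 0 < t) :
    ∫⁻ u in Ioc (0:ℝ) t, ENNReal.ofReal (u ^ (a-1)) = ENNReal.ofReal (t ^ a / a) := by
  rw [← MeasureTheory.ofReal_integral_eq_lintegral_ofReal]
  · rw [← intervalIntegral.integral_of_le ht.le,
      integral_rpow (Or.inl (by linarith : (-1:ℝ) < a - 1))]
    rw [Real.zero_rpow (by linarith : a - 1 + 1 ≠ 0)]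
    norm_num
  · rw [← IntegrableOn, ← intervalIntegrable_iff_integrableOn_Ioc_of_le ht.le]
    exact intervalIntegral.intervalIntegrable_rpow' (by linarith : (-1:ℝ) < a - 1)
  · filter_upwards [ae_restrict_mem measurableSet_Ioc] with u hu
    have : (0:ℝ) < u := hu.1
    positivity

lemma lint_two {a₁ a₂ p b : ℝ} (ha₁ : 0 < a₁) (ha₂ : 0 < a₂) (hp : 1 ≤ p) (hb : 0 < b) :
    ∫⁻ u in Ioi (0:ℝ),
        ENNReal.ofReal ((u ^ (a₁-1) + u ^ (a₂-1)) * Real.exp (-(b * u ^ p)))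
      ≤ ENNReal.ofReal (b ^ (-a₁/p) * (1/p) * Real.Gamma (a₁/p))
        + ENNReal.ofReal (b ^ (-a₂/p) * (1/p) * Real.Gamma (a₂/p)) := by
  rw [← lint_gamma ha₁ hp hb, ← lint_gamma ha₂ hp hb, ← lintegral_add_left]
  · refine le_of_eq (setLIntegral_congr_fun measurableSet_Ioi ?_)
    intro u hu
    have hu0 : (0:ℝ) < u := hu
    dsimp only
    rw [add_mul, ENNReal.ofReal_add (by positivity) (by positivity)]
  · fun_prop

lemma rpow_key {c t β p : ℝ} (hc : 0 < c) (ht : 0 < t) (hβ : 1 < β)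
    (hp : p = β / (β - 1)) (a : ℝ) :
    (c * t ^ (1 - p)) ^ (-a/p) = c ^ (-a/p) * t ^ (a/β) := by
  have h1 : (0:ℝ) < β - 1 := by linarith
  have h0 : (0:ℝ) < β := by linarith
  rw [Real.mul_rpow hc.le (Real.rpow_nonneg ht.le _), ← Real.rpow_mul ht.le]
  congr 1
  subst hp
  field_simp
  congr 1
  ring

theorem stmt17 (C α₁ α₂ β₁ β₂ : ℝ) (hC : 0 < C) (hα₁ : 0 < α₁) (hα₂ : 0 < α₂)
    (hβ₁ : 1 < β₁) (hβ₂ : 1 < β₂) :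
    ∃ c : ℝ, 0 < c ∧ ∀ t > (0:ℝ),
      (∫⁻ u in Set.Ioi (0:ℝ),
        ENNReal.ofReal (sg α₁ α₂ u *
          Real.exp (-(C * (t * sg (β₂ / (β₂ - 1)) (β₁ / (β₁ - 1)) (u / t)))) / u))
      ≤ ENNReal.ofReal (c * sg (α₁ / β₁) (α₂ / β₂) t) := by
  have hβ₁0 : (0:ℝ) < β₁ - 1 := by linarith
  have hβ₂0 : (0:ℝ) < β₂ - 1 := by linarith
  set p₁ : ℝ := β₁ / (β₁ - 1) with hp₁def
  set p₂ : ℝ := β₂ / (β₂ - 1) with hp₂def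
  have hp₁ : 1 < p₁ := by rw [hp₁def, lt_div_iff₀ hβ₁0]; linarith
  have hp₂ : 1 < p₂ := by rw [hp₂def, lt_div_iff₀ hβ₂0]; linarith
  set γ : ℝ := max α₁ α₂ with hγdef
  set δ : ℝ := min α₁ α₂ with hδdef
  have hγ : 0 < γ := lt_of_lt_of_le hα₁ (le_max_left _ _)
  have hδ : 0 < δ := lt_min hα₁ hα₂
  set n : ℕ := ⌈α₂ / β₁⌉₊ with hndef
  have hn : α₂ / β₁ ≤ (n:ℝ) := Nat.le_ceil _
  set M : ℝ := (n.factorial : ℝ) * (2/C)^n with hMdef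
  have hM0 : 0 < M := by positivity
  set G₁ : ℝ := C ^ (-α₁/p₁) * (1/p₁) * Real.Gamma (α₁/p₁) with hG₁def
  set G₂ : ℝ := C ^ (-γ/p₁) * (1/p₁) * Real.Gamma (γ/p₁) with hG₂def
  set G₃ : ℝ := C ^ (-δ/p₂) * (1/p₂) * Real.Gamma (δ/p₂) with hG₃def
  set G₄ : ℝ := C ^ (-α₂/p₂) * (1/p₂) * Real.Gamma (α₂/p₂) with hG₄def
  set G₅ : ℝ := (C/2) ^ (-α₂/p₁) * (1/p₁) * Real.Gamma (α₂/p₁) with hG₅def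
  have hp₁0 : (0:ℝ) < p₁ := lt_trans one_pos hp₁
  have hp₂0 : (0:ℝ) < p₂ := lt_trans one_pos hp₂
  have hG₁0 : 0 < G₁ := by
    refine mul_pos (mul_pos (Real.rpow_pos_of_pos hC _) (by positivity))
      (Real.Gamma_pos_of_pos (by positivity))
  have hG₂0 : 0 < G₂ := by
    refine mul_pos (mul_pos (Real.rpow_pos_of_pos hC _) (by positivity))
      (Real.Gamma_pos_of_pos (by positivity))
  have hG₃0 : 0 < G₃ := by
    refine mul_pos (mul_pos (Real.rpow_pos_of_pos (by positivity) _) (by positivity))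
      (Real.Gamma_pos_of_pos (by positivity))
  have hG₄0 : 0 < G₄ := by
    refine mul_pos (mul_pos (Real.rpow_pos_of_pos (by positivity) _) (by positivity))
      (Real.Gamma_pos_of_pos (by positivity))
  have hG₅0 : 0 < G₅ := by
    refine mul_pos (mul_pos (Real.rpow_pos_of_pos (by positivity) _) (by positivity))
      (Real.Gamma_pos_of_pos (by positivity))
  refine ⟨1/α₁ + G₁ + G₂ + G₃ + G₄ + G₅ * M, by
    have := mul_pos hG₅0 hM0
    have : (0:ℝ) < 1/α₁ := by positivity
    nlinarith [mul_pos hG₅0 hM0], ?_⟩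
  intro t ht
  rw [show Ioi (0:ℝ) = Ioc 0 t ∪ Ioi t from (Ioc_union_Ioi_eq_Ioi ht.le).symm,
    lintegral_union measurableSet_Ioi (Set.Ioc_disjoint_Ioi le_rfl)]
  rcases le_or_gt t 1 with ht1 | ht1
  · -- case t ≤ 1
    have hR : sg (α₁/β₁) (α₂/β₂) t = t ^ (α₁/β₁) := by unfold sg; exact if_pos ht1
    set b₁ : ℝ := C * t ^ (1 - p₁) with hb₁def
    have hb₁0 : 0 < b₁ := by positivity
    have hA : (∫⁻ u in Ioc (0:ℝ) t,
        ENNReal.ofReal (sg α₁ α₂ u *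
          Real.exp (-(C * (t * sg p₂ p₁ (u / t)))) / u))
        ≤ ENNReal.ofReal (t ^ α₁ / α₁) := by
      refine le_trans (setLIntegral_mono' measurableSet_Ioc ?_)
        (le_of_eq (lint_pow_Ioc hα₁ ht))
      intro u hu
      have hu0 : (0:ℝ) < u := hu.1
      apply ENNReal.ofReal_le_ofReal
      have h1 : sg α₁ α₂ u = u ^ α₁ := by unfold sg; exact if_pos (le_trans hu.2 ht1)
      have hsn : 0 ≤ sg p₂ p₁ (u/t) := sg_nonneg (by positivity)
      have h2 : Real.exp (-(C * (t * sg p₂ p₁ (u/t)))) ≤ 1 := by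
        rw [Real.exp_le_one_iff]
        have h3 : 0 ≤ C * (t * sg p₂ p₁ (u/t)) := mul_nonneg hC.le (mul_nonneg ht.le hsn)
        linarith
      calc sg α₁ α₂ u * Real.exp (-(C * (t * sg p₂ p₁ (u / t)))) / u
          ≤ u ^ α₁ * 1 / u := by rw [h1]; gcongr
        _ = u ^ (α₁ - 1) := by rw [mul_one, Real.rpow_sub hu0, Real.rpow_one]
    have hB : (∫⁻ u in Ioi t,
        ENNReal.ofReal (sg α₁ α₂ u *
          Real.exp (-(C * (t * sg p₂ p₁ (u / t)))) / u))
        ≤ ENNReal.ofReal (b₁ ^ (-α₁/p₁) * (1/p₁) * Real.Gamma (α₁/p₁))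
          + ENNReal.ofReal (b₁ ^ (-γ/p₁) * (1/p₁) * Real.Gamma (γ/p₁)) := by
      refine le_trans (le_trans (setLIntegral_mono' measurableSet_Ioi ?_)
        (lintegral_mono_set (Ioi_subset_Ioi ht.le)))
        (lint_two hα₁ hγ hp₁.le hb₁0)
      intro u hu
      have hut : t < u := hu
      have hu0 : (0:ℝ) < u := lt_trans ht hut
      have hs : sg p₂ p₁ (u/t) = (u/t) ^ p₁ := by
        unfold sg; exact if_neg (not_le.mpr ((one_lt_div ht).mpr hut))
      have hexp : C * (t * sg p₂ p₁ (u/t)) = b₁ * u ^ p₁ := by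
        rw [hs, Real.div_rpow hu0.le ht.le, hb₁def, Real.rpow_sub ht, Real.rpow_one]
        field_simp
      have hσ : sg α₁ α₂ u ≤ u ^ α₁ + u ^ γ := by
        unfold sg; split
        · nlinarith [Real.rpow_nonneg hu0.le γ]
        · next h =>
          push_neg at h
          have h2 : u ^ α₂ ≤ u ^ γ :=
            Real.rpow_le_rpow_of_exponent_le h.le (le_max_right _ _)
          nlinarith [Real.rpow_nonneg hu0.le α₁]
      apply ENNReal.ofReal_le_ofReal
      rw [hexp]
      calc sg α₁ α₂ u * Real.exp (-(b₁ * u ^ p₁)) / u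
          ≤ (u ^ α₁ + u ^ γ) * Real.exp (-(b₁ * u ^ p₁)) / u := by
            gcongr
        _ = (u ^ (α₁-1) + u ^ (γ-1)) * Real.exp (-(b₁ * u ^ p₁)) := by
            rw [Real.rpow_sub hu0, Real.rpow_sub hu0, Real.rpow_one]
            ring
    refine le_trans (add_le_add hA hB) ?_
    rw [← ENNReal.ofReal_add (by positivity) (by positivity),
      ← ENNReal.ofReal_add (by positivity) (by positivity), hR]
    apply ENNReal.ofReal_le_ofReal
    have e₁ : b₁ ^ (-α₁/p₁) * (1/p₁) * Real.Gamma (α₁/p₁) = G₁ * t ^ (α₁/β₁) := by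
      rw [hb₁def, rpow_key hC ht hβ₁ hp₁def, hG₁def]; ring
    have e₂ : b₁ ^ (-γ/p₁) * (1/p₁) * Real.Gamma (γ/p₁) = G₂ * t ^ (γ/β₁) := by
      rw [hb₁def, rpow_key hC ht hβ₁ hp₁def, hG₂def]; ring
    rw [e₁, e₂]
    have m₁ : t ^ α₁ ≤ t ^ (α₁/β₁) :=
      Real.rpow_le_rpow_of_exponent_ge ht ht1 (div_le_self hα₁.le hβ₁.le)
    have m₂ : t ^ (γ/β₁) ≤ t ^ (α₁/β₁) := by
      apply Real.rpow_le_rpow_of_exponent_ge ht ht1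
      gcongr
      exact le_max_left _ _
    have tp0 : (0:ℝ) ≤ t ^ (α₁/β₁) := by positivity
    have A1 : t ^ α₁ / α₁ ≤ (1/α₁) * t ^ (α₁/β₁) := by
      rw [div_eq_mul_one_div, mul_comm]
      exact mul_le_mul_of_nonneg_left m₁ (by positivity)
    have A2 : G₂ * t ^ (γ/β₁) ≤ G₂ * t ^ (α₁/β₁) :=
      mul_le_mul_of_nonneg_left m₂ hG₂0.le
    have A3 : (0:ℝ) ≤ (G₃ + G₄ + G₅ * M) * t ^ (α₁/β₁) := by
      have := mul_pos hG₅0 hM0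
      apply mul_nonneg (by linarith) tp0
    nlinarith
  · -- case 1 < t
    have hR : sg (α₁/β₁) (α₂/β₂) t = t ^ (α₂/β₂) := by
      unfold sg; exact if_neg (not_le.mpr ht1)
    set b₂ : ℝ := C * t ^ (1 - p₂) with hb₂def
    set b₃ : ℝ := (C/2) * t ^ (1 - p₁) with hb₃def
    have hb₂0 : 0 < b₂ := by positivity
    have hb₃0 : 0 < b₃ := by positivity
    have hA : (∫⁻ u in Ioc (0:ℝ) t,
        ENNReal.ofReal (sg α₁ α₂ u *
          Real.exp (-(C * (t * sg p₂ p₁ (u / t)))) / u))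
        ≤ ENNReal.ofReal (b₂ ^ (-δ/p₂) * (1/p₂) * Real.Gamma (δ/p₂))
          + ENNReal.ofReal (b₂ ^ (-α₂/p₂) * (1/p₂) * Real.Gamma (α₂/p₂)) := by
      refine le_trans (le_trans (setLIntegral_mono' measurableSet_Ioc ?_)
        (lintegral_mono_set Ioc_subset_Ioi_self))
        (lint_two hδ hα₂ hp₂.le hb₂0)
      intro u hu
      have hu0 : (0:ℝ) < u := hu.1
      have hs : sg p₂ p₁ (u/t) = (u/t) ^ p₂ := by
        unfold sg; exact if_pos ((div_le_one ht).mpr hu.2)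
      have hexp : C * (t * sg p₂ p₁ (u/t)) = b₂ * u ^ p₂ := by
        rw [hs, Real.div_rpow hu0.le ht.le, hb₂def, Real.rpow_sub ht, Real.rpow_one]
        field_simp
      have hσ : sg α₁ α₂ u ≤ u ^ δ + u ^ α₂ := by
        unfold sg; split
        · next h =>
          have h2 : u ^ α₁ ≤ u ^ δ :=
            Real.rpow_le_rpow_of_exponent_ge hu0 h (min_le_left _ _)
          nlinarith [Real.rpow_nonneg hu0.le α₂]
        · nlinarith [Real.rpow_nonneg hu0.le δ]
      apply ENNReal.ofReal_le_ofReal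
      rw [hexp]
      calc sg α₁ α₂ u * Real.exp (-(b₂ * u ^ p₂)) / u
          ≤ (u ^ δ + u ^ α₂) * Real.exp (-(b₂ * u ^ p₂)) / u := by
            gcongr
        _ = (u ^ (δ-1) + u ^ (α₂-1)) * Real.exp (-(b₂ * u ^ p₂)) := by
            rw [Real.rpow_sub hu0, Real.rpow_sub hu0, Real.rpow_one]
            ring
    have hB : (∫⁻ u in Ioi t,
        ENNReal.ofReal (sg α₁ α₂ u *
          Real.exp (-(C * (t * sg p₂ p₁ (u / t)))) / u))
        ≤ ENNReal.ofReal (Real.exp (-(C*t/2)) *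
            (b₃ ^ (-α₂/p₁) * (1/p₁) * Real.Gamma (α₂/p₁))) := by
      have step1 : (∫⁻ u in Ioi t,
          ENNReal.ofReal (sg α₁ α₂ u *
            Real.exp (-(C * (t * sg p₂ p₁ (u / t)))) / u))
          ≤ ∫⁻ u in Ioi (0:ℝ),
            ENNReal.ofReal (Real.exp (-(C*t/2)) *
              (u ^ (α₂-1) * Real.exp (-(b₃ * u ^ p₁)))) := by
        refine le_trans (setLIntegral_mono' measurableSet_Ioi ?_)
          (lintegral_mono_set (Ioi_subset_Ioi ht.le))
        intro u hu
        have hut : t < u := hu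
        have hu0 : (0:ℝ) < u := lt_trans ht hut
        have hs : sg p₂ p₁ (u/t) = (u/t) ^ p₁ := by
          unfold sg; exact if_neg (not_le.mpr ((one_lt_div ht).mpr hut))
        have hσ : sg α₁ α₂ u = u ^ α₂ := by
          unfold sg; exact if_neg (not_le.mpr (lt_trans ht1 hut))
        have hexp : C * (t * sg p₂ p₁ (u/t)) = b₃ * u ^ p₁ + b₃ * u ^ p₁ := by
          rw [hs, Real.div_rpow hu0.le ht.le, hb₃def, Real.rpow_sub ht, Real.rpow_one]
          field_simp
          ring
        have hct : C*t/2 ≤ b₃ * u ^ p₁ := by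
          have e : C*t/2 = b₃ * t ^ p₁ := by
            rw [hb₃def, Real.rpow_sub ht, Real.rpow_one]
            field_simp
          rw [e]
          gcongr
          all_goals first
          | exact hb₃0.le
          | exact ht.le
          | exact hut.le
        apply ENNReal.ofReal_le_ofReal
        rw [hσ, hexp, neg_add, Real.exp_add]
        have hle : Real.exp (-(b₃ * u ^ p₁)) ≤ Real.exp (-(C*t/2)) :=
          Real.exp_le_exp.mpr (neg_le_neg hct)
        calc u ^ α₂ * (Real.exp (-(b₃ * u ^ p₁)) * Real.exp (-(b₃ * u ^ p₁))) / u
            = (u ^ α₂ / u * Real.exp (-(b₃ * u ^ p₁))) * Real.exp (-(b₃ * u ^ p₁)) := by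
              ring
          _ ≤ (u ^ α₂ / u * Real.exp (-(b₃ * u ^ p₁))) * Real.exp (-(C*t/2)) := by
              gcongr
          _ = Real.exp (-(C*t/2)) * (u ^ (α₂-1) * Real.exp (-(b₃ * u ^ p₁))) := by
              rw [Real.rpow_sub hu0, Real.rpow_one]
              ring
      refine le_trans step1 ?_
      have : ∀ u : ℝ, ENNReal.ofReal (Real.exp (-(C*t/2)) *
              (u ^ (α₂-1) * Real.exp (-(b₃ * u ^ p₁))))
            = ENNReal.ofReal (Real.exp (-(C*t/2)))
              * ENNReal.ofReal (u ^ (α₂-1) * Real.exp (-(b₃ * u ^ p₁))) := fun u =>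
        ENNReal.ofReal_mul (Real.exp_nonneg _)
      simp_rw [this]
      rw [lintegral_const_mul' _ _ ENNReal.ofReal_ne_top, lint_gamma hα₂ hp₁.le hb₃0,
        ← ENNReal.ofReal_mul (Real.exp_nonneg _)]
    refine le_trans (add_le_add hA hB) ?_
    rw [← ENNReal.ofReal_add (by positivity) (by positivity),
      ← ENNReal.ofReal_add (by positivity) (by positivity), hR]
    apply ENNReal.ofReal_le_ofReal
    have e₃ : b₂ ^ (-δ/p₂) * (1/p₂) * Real.Gamma (δ/p₂) = G₃ * t ^ (δ/β₂) := by
      rw [hb₂def, rpow_key hC ht hβ₂ hp₂def, hG₃def]; ring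
    have e₄ : b₂ ^ (-α₂/p₂) * (1/p₂) * Real.Gamma (α₂/p₂) = G₄ * t ^ (α₂/β₂) := by
      rw [hb₂def, rpow_key hC ht hβ₂ hp₂def, hG₄def]; ring
    have e₅ : b₃ ^ (-α₂/p₁) * (1/p₁) * Real.Gamma (α₂/p₁) = G₅ * t ^ (α₂/β₁) := by
      rw [hb₃def, rpow_key (by positivity : (0:ℝ) < C/2) ht hβ₁ hp₁def, hG₅def]; ring
    rw [e₃, e₄, e₅]
    have tp0 : (0:ℝ) ≤ t ^ (α₂/β₂) := by positivity
    have m₃ : t ^ (δ/β₂) ≤ t ^ (α₂/β₂) := by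
      apply Real.rpow_le_rpow_of_exponent_le ht1.le
      gcongr
      exact min_le_right _ _
    have k4 : (1:ℝ) ≤ t ^ (α₂/β₂) := by
      rw [show (1:ℝ) = t ^ (0:ℝ) from (Real.rpow_zero t).symm]
      exact Real.rpow_le_rpow_of_exponent_le ht1.le (by positivity)
    have hE : Real.exp (-(C*t/2)) * (G₅ * t ^ (α₂/β₁)) ≤ G₅ * M * t ^ (α₂/β₂) := by
      have k1 : t ^ (α₂/β₁) ≤ t ^ (n:ℕ) := by
        rw [← Real.rpow_natCast]
        exact Real.rpow_le_rpow_of_exponent_le ht1.le hn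
      have k2 : (C*t/2)^n / (n.factorial : ℝ) ≤ Real.exp (C*t/2) :=
        Real.pow_div_factorial_le_exp _ (by positivity) n
      have h5 : (C*t/2)^n ≤ (n.factorial : ℝ) * Real.exp (C*t/2) := by
        rw [div_le_iff₀ (by positivity)] at k2
        linarith [k2]
      have h4 : t ^ (n:ℕ) ≤ M * Real.exp (C*t/2) := by
        calc (t:ℝ) ^ (n:ℕ) = (2/C)^n * (C*t/2)^n := by
              rw [← mul_pow]
              congr 1
              field_simp
          _ ≤ (2/C)^n * ((n.factorial : ℝ) * Real.exp (C*t/2)) := by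
              gcongr
          _ = M * Real.exp (C*t/2) := by rw [hMdef]; ring
      have k3 : Real.exp (-(C*t/2)) * t ^ (n:ℕ) ≤ M := by
        calc Real.exp (-(C*t/2)) * t ^ (n:ℕ)
            ≤ Real.exp (-(C*t/2)) * (M * Real.exp (C*t/2)) := by
              gcongr
          _ = M * (Real.exp (-(C*t/2)) * Real.exp (C*t/2)) := by ring
          _ = M := by rw [← Real.exp_add, neg_add_cancel, Real.exp_zero, mul_one]
      calc Real.exp (-(C*t/2)) * (G₅ * t ^ (α₂/β₁))
          = G₅ * (Real.exp (-(C*t/2)) * t ^ (α₂/β₁)) := by ring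
        _ ≤ G₅ * (Real.exp (-(C*t/2)) * t ^ (n:ℕ)) := by
            gcongr
        _ ≤ G₅ * M := mul_le_mul_of_nonneg_left k3 hG₅0.le
        _ ≤ G₅ * M * t ^ (α₂/β₂) := le_mul_of_one_le_right (by positivity) k4
    have A1 : G₃ * t ^ (δ/β₂) ≤ G₃ * t ^ (α₂/β₂) := mul_le_mul_of_nonneg_left m₃ hG₃0.le
    have A2 : (0:ℝ) ≤ (1/α₁ + G₁ + G₂) * t ^ (α₂/β₂) := by positivity
    linarith
end
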